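/- arXiv:0810.2402 — 14 statements merged into one kernel-verified Lean document; each statement's English description precedes it below -/
import Mathlib

section
/- Let P be a nonzero nonmaximal prime ideal of an integral domain R. If for each a ∈ R \ P the ideal aR + P is invertible, then for each prime Q of R properly containing P there is an invertible ideal I with P ⊊ I ⊆ Q. -/
/-- An ideal is divisorial if `I = (R : (R : I))`, phrased via fractional ideals. -/
def IsDivisorial (R : Type*) [CommRing R] [IsDomain R] (I : Ideal R) : Prop :=
  (1 / (1 / (I : FractionalIdeal (nonZeroDivisors R) (FractionRing R))) :
    FractionalIdeal (nonZeroDivisors R) (FractionRing R))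
    = (I : FractionalIdeal (nonZeroDivisors R) (FractionRing R))

/-- An ideal is invertible if it is a unit as a fractional ideal. -/
def IsInvertibleIdeal (R : Type*) [CommRing R] [IsDomain R] (I : Ideal R) : Prop :=
  IsUnit (I : FractionalIdeal (nonZeroDivisors R) (FractionRing R))

/-- A Prüfer domain: every nonzero finitely generated ideal is invertible. -/
def IsPrufer (R : Type*) [CommRing R] [IsDomain R] : Prop :=
  ∀ I : Ideal R, I ≠ ⊥ → I.FG → IsInvertibleIdeal R I

/-- A prime `P` is sharp if it contains a finitely generated ideal contained
only in the maximal ideals that contain `P`. -/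
def IsSharp (R : Type*) [CommRing R] (P : Ideal R) : Prop :=
  ∃ I : Ideal R, I.FG ∧ I ≤ P ∧ ∀ M : Ideal R, M.IsMaximal → I ≤ M → P ≤ M

/-- If for each `a ∈ R \ P` the ideal `aR + P` is invertible, then every prime
properly containing `P` contains an invertible ideal properly containing `P`. -/
theorem invertible_between_of_invertible_add (R : Type*) [CommRing R] [IsDomain R]
    (P : Ideal R) (hP : P.IsPrime) (h0 : P ≠ ⊥) (hnm : ¬ P.IsMaximal)
    (h : ∀ a : R, a ∉ P → IsInvertibleIdeal R (Ideal.span {a} ⊔ P)) :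
    ∀ Q : Ideal R, Q.IsPrime → P < Q →
      ∃ I : Ideal R, IsInvertibleIdeal R I ∧ P < I ∧ I ≤ Q := by
  intro Q hQ hPQ
  obtain ⟨a, haQ, haP⟩ := SetLike.exists_of_lt hPQ
  refine ⟨Ideal.span {a} ⊔ P, h a haP, ?_, ?_⟩
  · refine lt_of_le_of_ne le_sup_right fun he => haP ?_
    rw [he]
    exact Ideal.mem_sup_left (Ideal.mem_span_singleton_self a)
  · exact sup_le ((Ideal.span_singleton_le_iff_mem Q).mpr haQ) hPQ.le
end

section
/- Let P be a nonzero nonmaximal prime ideal of an integral domain R. If for each prime Q of R properly containing P there is an invertible ideal I with P ⊊ I ⊆ Q, then every maximal ideal of the ring (P:P) that contains P contracts to P in R. -/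
/-- The ring `(P:P) = {z ∈ K : zP ⊆ P}`, as a subalgebra of the quotient field. -/
def multiplierRing {R : Type*} [CommRing R] [IsDomain R] (P : Ideal R) :
    Subalgebra R (FractionRing R) where
  carrier := {z | ∀ p ∈ P, ∃ q ∈ P,
    z * algebraMap R (FractionRing R) p = algebraMap R (FractionRing R) q}
  mul_mem' := by
    intro z w hz hw p hp
    obtain ⟨q, hq, hqe⟩ := hw p hp
    obtain ⟨r, hr, hre⟩ := hz q hq
    exact ⟨r, hr, by rw [mul_assoc, hqe, hre]⟩
  add_mem' := by
    intro z w hz hw p hp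
    obtain ⟨q, hq, hqe⟩ := hz p hp
    obtain ⟨r, hr, hre⟩ := hw p hp
    exact ⟨q + r, Ideal.add_mem _ hq hr, by rw [add_mul, hqe, hre, map_add]⟩
  algebraMap_mem' := by
    intro r p hp
    exact ⟨r * p, Ideal.mul_mem_left _ _ hp, by rw [map_mul]⟩

/-- If every prime properly containing `P` contains an invertible ideal properly
containing `P`, then every maximal ideal of `(P:P)` containing `P` contracts to `P`. -/
theorem antesharp_of_invertible_between (R : Type*) [CommRing R] [IsDomain R]
    (P : Ideal R) (hP : P.IsPrime) (h0 : P ≠ ⊥) (hnm : ¬ P.IsMaximal)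
    (h : ∀ Q : Ideal R, Q.IsPrime → P < Q →
      ∃ I : Ideal R, IsInvertibleIdeal R I ∧ P < I ∧ I ≤ Q) :
    ∀ M' : Ideal (multiplierRing P), M'.IsMaximal →
      P ≤ M'.comap (algebraMap R (multiplierRing P)) →
      M'.comap (algebraMap R (multiplierRing P)) = P := by

  intro M' hM' hle
  by_contra hne
  haveI := hM'.isPrime
  have hQp : (M'.comap (algebraMap R (multiplierRing P))).IsPrime :=
    Ideal.comap_isPrime _ _
  have hlt : P < M'.comap (algebraMap R (multiplierRing P)) :=
    lt_of_le_of_ne hle (Ne.symm hne)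
  obtain ⟨I, hI, hPI, hIQ⟩ := h _ hQp hlt
  obtain ⟨u, hu⟩ := hI
  have hmul : (I : FractionalIdeal (nonZeroDivisors R) (FractionRing R)) * ↑u⁻¹ = 1 := by
    rw [← hu, ← Units.val_mul, mul_inv_cancel, Units.val_one]
  obtain ⟨x0, hx0I, hx0P⟩ := SetLike.exists_of_lt hPI
  have hJT : ∀ y : FractionRing R,
      y ∈ (↑u⁻¹ : FractionalIdeal (nonZeroDivisors R) (FractionRing R)) →
      y ∈ multiplierRing P := by
    intro y hy p hp
    have h1 : y * algebraMap R (FractionRing R) p ∈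
        (1 : FractionalIdeal (nonZeroDivisors R) (FractionRing R)) := by
      rw [← hmul, mul_comm]
      exact FractionalIdeal.mul_mem_mul hy
        (FractionalIdeal.mem_coeIdeal_of_mem _ (hPI.le hp))
    obtain ⟨r, hr⟩ := (FractionalIdeal.mem_one_iff _).mp h1
    refine ⟨r, ?_, hr.symm⟩
    have h2 : algebraMap R (FractionRing R) x0 * y ∈
        (1 : FractionalIdeal (nonZeroDivisors R) (FractionRing R)) := by
      rw [← hmul]
      exact FractionalIdeal.mul_mem_mul
        (FractionalIdeal.mem_coeIdeal_of_mem _ hx0I) hy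
    obtain ⟨s, hs⟩ := (FractionalIdeal.mem_one_iff _).mp h2
    have heq : algebraMap R (FractionRing R) (x0 * r)
        = algebraMap R (FractionRing R) (s * p) := by
      rw [map_mul, map_mul, hr, hs]; ring
    have hx0r : x0 * r ∈ P := by
      rw [IsFractionRing.injective R (FractionRing R) heq]
      exact P.mul_mem_left s hp
    exact (hP.mem_or_mem hx0r).resolve_left hx0P
  have h1mem : (1 : FractionRing R) ∈
      ((I : FractionalIdeal (nonZeroDivisors R) (FractionRing R)) * ↑u⁻¹) := by
    rw [hmul]
    exact (FractionalIdeal.mem_one_iff _).mpr ⟨1, map_one _⟩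
  have h1' : (1 : FractionRing R) ∈
      ((↑((I : FractionalIdeal (nonZeroDivisors R) (FractionRing R)) * ↑u⁻¹) :
        Submodule R (FractionRing R))) := h1mem
  rw [FractionalIdeal.coe_mul] at h1'
  have key : ∃ m ∈ M', (m : FractionRing R) = 1 := by
    refine Submodule.mul_induction_on h1' ?_ ?_
    · intro x hx y hy
      obtain ⟨p, hpI, hpe⟩ := (FractionalIdeal.mem_coe).mp hx
      have hyT : y ∈ multiplierRing P := hJT y ((FractionalIdeal.mem_coe).mp hy)
      refine ⟨algebraMap R (multiplierRing P) p * ⟨y, hyT⟩, ?_, ?_⟩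
      · exact Ideal.mul_mem_right _ _ (hIQ hpI)
      · simp only [Algebra.linearMap_apply] at hpe
        show (algebraMap R (FractionRing R) p) * y = x * y
        rw [hpe]
    · rintro z w ⟨m1, hm1, he1⟩ ⟨m2, hm2, he2⟩
      exact ⟨m1 + m2, Ideal.add_mem _ hm1 hm2, by
        push_cast; rw [he1, he2]⟩
  obtain ⟨m, hm, hme⟩ := key
  have : m = 1 := Subtype.ext hme
  exact hM'.ne_top ((Ideal.eq_top_iff_one M').mpr (this ▸ hm))
end

section
/- Let P be a nonzero nonmaximal prime ideal of an integral domain R that is antesharp, i.e., every maximal ideal of (P:P) containing P contracts to P in R. Then P is divisorial: P = (R : (R : P)). -/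
/-!
Let `T = (P:P)` and let `C = {r ∈ R : rT ⊆ R}` be its conductor; `P ⊆ C` because `TP ⊆ P`.
If `T = R`, the antesharp condition says every maximal ideal over `P` equals `P`, which is
excluded; so `C ≠ R`. Since `P` is an ideal of `T`, it lies in a maximal ideal `M` of `T`, which
contracts to `P`. If some `a ∈ C` were outside `P`, then `ya + m = 1` with `y ∈ T`, `m ∈ M`;
here `b = ya` lies in `C` and `1 - b = m` lies in `M ∩ R = P ⊆ C`, forcing `C = R`. Hence
`C = P`. Finally `1 ∈ (R:P)` and `T ⊆ (R:P)`, so every `x ∈ (R:(R:P))` is in `R` and satisfies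
`xT ⊆ R`, i.e. `(R:(R:P)) ⊆ C = P`.
-/

open scoped nonZeroDivisors

section Colon

variable {R S : Type*} [CommRing R] [CommRing S] [Algebra R S]

-- `(1 : Submodule R S).colon Set.univ` is the conductor `{r : R | r • S ⊆ R}`.
theorem one_colon_univ_le_comap_or_sup_comap_eq_top {M : Ideal S} (hM : M.IsMaximal) :
    (1 : Submodule R S).colon Set.univ ≤ M.comap (algebraMap R S) ∨
      (1 : Submodule R S).colon Set.univ ⊔ M.comap (algebraMap R S) = ⊤ := by
  refine or_iff_not_imp_left.mpr fun hle => ?_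
  obtain ⟨a, haC, haM⟩ := SetLike.not_le_iff_exists.mp hle
  obtain ⟨y, m, hm, hym⟩ := hM.exists_inv haM
  obtain ⟨b, hb⟩ := Submodule.mem_one.mp (Submodule.mem_colon.mp haC y trivial)
  have hbC : b ∈ (1 : Submodule R S).colon Set.univ := Submodule.mem_colon.mpr fun s _ => by
    rw [Algebra.smul_def, hb, smul_mul_assoc]
    exact Submodule.mem_colon.mp haC _ trivial
  have hb' : 1 - b ∈ M.comap (algebraMap R S) := by
    rw [Ideal.mem_comap, map_sub, map_one, hb, Algebra.smul_def, mul_comm, ← hym,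
      add_sub_cancel_left]
    exact hm
  rw [Ideal.eq_top_iff_one, ← add_sub_cancel b 1]
  exact Submodule.add_mem_sup hbC hb'

theorem surjective_algebraMap_of_one_colon_univ_eq_top
    (h : (1 : Submodule R S).colon Set.univ = ⊤) : Function.Surjective (algebraMap R S) :=
  fun s => by
    have h1 : (1 : R) ∈ (1 : Submodule R S).colon Set.univ := h ▸ Submodule.mem_top
    simpa using Submodule.mem_one.mp (Submodule.mem_colon.mp h1 s trivial)

theorem Ideal.isMaximal_of_forall_comap_eq (hbij : Function.Bijective (algebraMap R S))
    {P : Ideal R} (hP : P ≠ ⊤)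
    (h : ∀ M : Ideal S, M.IsMaximal → P ≤ M.comap (algebraMap R S) →
      M.comap (algebraMap R S) = P) :
    P.IsMaximal := by
  obtain ⟨M, hM, hPM⟩ := Ideal.exists_le_maximal P hP
  have hcomap : (M.map (algebraMap R S)).comap (algebraMap R S) = M :=
    Ideal.comap_map_of_bijective _ hbij
  have hMP := h _ ((Ideal.isMaximal_map_iff_of_bijective _ hbij).mpr hM) (hcomap.ge.trans' hPM)
  rw [hcomap] at hMP
  exact hMP ▸ hM

end Colon

namespace FractionalIdeal

variable {R K : Type*} [CommRing R] [IsDomain R] [Field K] [Algebra R K] [IsFractionRing R K]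

theorem one_le_one_div_coeIdeal {J : Ideal R} (hJ : J ≠ ⊥) :
    1 ≤ 1 / (J : FractionalIdeal R⁰ K) :=
  (le_div_iff_mul_le (coeIdeal_ne_zero.mpr hJ)).mpr (by rw [one_mul]; exact coeIdeal_le_one)

theorem le_one_div_one_div {I : FractionalIdeal R⁰ K} (hI : 1 / I ≠ 0) : I ≤ 1 / (1 / I) :=
  (le_div_iff_mul_le hI).mpr mul_one_div_le_one

end FractionalIdeal

section MultiplierRing

variable {R : Type*} [CommRing R] [IsDomain R] (P : Ideal R)

theorem injective_algebraMap_multiplierRing :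
    Function.Injective (algebraMap R (multiplierRing P)) :=
  fun _ _ hab => IsFractionRing.injective R (FractionRing R) (congrArg Subtype.val hab)

theorem le_one_colon_univ_multiplierRing :
    P ≤ (1 : Submodule R (multiplierRing P)).colon Set.univ := by
  intro p hp
  refine Submodule.mem_colon.mpr fun t _ => ?_
  obtain ⟨q, -, hq⟩ := t.2 p hp
  exact Submodule.mem_one.mpr ⟨q, Subtype.ext (by simp [Algebra.smul_def, ← hq, mul_comm])⟩

def multiplierRingIdeal : Ideal (multiplierRing P) where
  carrier := {x | ∃ p ∈ P, algebraMap R (FractionRing R) p = x}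
  add_mem' := by
    rintro _ _ ⟨p, hp, hpx⟩ ⟨q, hq, hqy⟩
    exact ⟨p + q, P.add_mem hp hq, by rw [map_add, hpx, hqy]; rfl⟩
  zero_mem' := ⟨0, P.zero_mem, by rw [map_zero]; rfl⟩
  smul_mem' := by
    rintro t x ⟨p, hp, hpx⟩
    obtain ⟨q, hq, hqe⟩ := t.2 p hp
    exact ⟨q, hq, by rw [← hqe, hpx]; rfl⟩

theorem comap_multiplierRingIdeal :
    (multiplierRingIdeal P).comap (algebraMap R (multiplierRing P)) = P := by
  ext r
  refine ⟨fun ⟨p, hp, hpr⟩ => ?_, fun hr => ⟨r, hr, rfl⟩⟩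
  rwa [← IsFractionRing.injective R (FractionRing R) hpr]

theorem exists_isMaximal_multiplierRing_le_comap (hP : P ≠ ⊤) :
    ∃ M : Ideal (multiplierRing P), M.IsMaximal ∧
      P ≤ M.comap (algebraMap R (multiplierRing P)) := by
  have hne : multiplierRingIdeal P ≠ ⊤ := fun htop =>
    hP (by rw [← comap_multiplierRingIdeal P, htop, Ideal.comap_top])
  obtain ⟨M, hM, hJM⟩ := Ideal.exists_le_maximal _ hne
  exact ⟨M, hM, (comap_multiplierRingIdeal P).ge.trans (Ideal.comap_mono hJM)⟩

theorem coe_mem_one_div_multiplierRing (h0 : P ≠ ⊥) (t : multiplierRing P) :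
    (t : FractionRing R) ∈ 1 / (P : FractionalIdeal R⁰ (FractionRing R)) := by
  rw [FractionalIdeal.mem_div_iff_of_ne_zero (FractionalIdeal.coeIdeal_ne_zero.mpr h0)]
  rintro _ ⟨p, hp, rfl⟩
  obtain ⟨q, -, hq⟩ := t.2 p hp
  exact (FractionalIdeal.mem_one_iff _).mpr ⟨q, hq.symm⟩

theorem one_div_one_div_le_one_colon_univ_multiplierRing (h0 : P ≠ ⊥) :
    1 / (1 / (P : FractionalIdeal R⁰ (FractionRing R))) ≤
      (((1 : Submodule R (multiplierRing P)).colon Set.univ : Ideal R) :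
        FractionalIdeal R⁰ (FractionRing R)) := by
  have hP1 := FractionalIdeal.one_le_one_div_coeIdeal (K := FractionRing R) h0
  intro x hx
  have hmul := (FractionalIdeal.mem_div_iff_of_ne_zero (zero_lt_one.trans_le hP1).ne').mp hx
  obtain ⟨a, rfl⟩ := (FractionalIdeal.mem_one_iff R⁰).mp
    (by simpa using hmul 1 (hP1 (FractionalIdeal.one_mem_one R⁰)))
  refine (FractionalIdeal.mem_coeIdeal _).mpr ⟨a, Submodule.mem_colon.mpr fun t _ => ?_, rfl⟩
  obtain ⟨b, hb⟩ := (FractionalIdeal.mem_one_iff _).mp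
    (hmul _ (coe_mem_one_div_multiplierRing P h0 t))
  exact Submodule.mem_one.mpr ⟨b, Subtype.ext (by simp [Algebra.smul_def, hb])⟩

end MultiplierRing

/-- An antesharp nonzero nonmaximal prime of a domain is divisorial. -/
theorem divisorial_of_antesharp (R : Type*) [CommRing R] [IsDomain R]
    (P : Ideal R) (hP : P.IsPrime) (h0 : P ≠ ⊥) (hnm : ¬ P.IsMaximal)
    (h : ∀ M' : Ideal (multiplierRing P), M'.IsMaximal →
      P ≤ M'.comap (algebraMap R (multiplierRing P)) →
      M'.comap (algebraMap R (multiplierRing P)) = P) :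
    IsDivisorial R P := by
  set C := (1 : Submodule R (multiplierRing P)).colon Set.univ
  have hPC : P ≤ C := le_one_colon_univ_multiplierRing P
  have hCne : C ≠ ⊤ := fun hC => hnm <| Ideal.isMaximal_of_forall_comap_eq
    ⟨injective_algebraMap_multiplierRing P, surjective_algebraMap_of_one_colon_univ_eq_top hC⟩
    hP.ne_top h
  obtain ⟨M, hM, hPM⟩ := exists_isMaximal_multiplierRing_le_comap P hP.ne_top
  have hMP := h M hM hPM
  have hCP : C ≤ P := by
    rw [← hMP]
    refine (one_colon_univ_le_comap_or_sup_comap_eq_top hM).resolve_right fun htop => hCne ?_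
    rwa [hMP, sup_eq_left.mpr hPC] at htop
  have hP1 := FractionalIdeal.one_le_one_div_coeIdeal (K := FractionRing R) h0
  refine le_antisymm ?_ (FractionalIdeal.le_one_div_one_div (zero_lt_one.trans_le hP1).ne')
  calc 1 / (1 / (P : FractionalIdeal R⁰ (FractionRing R)))
      ≤ (C : FractionalIdeal R⁰ (FractionRing R)) :=
        one_div_one_div_le_one_colon_univ_multiplierRing P h0
    _ ≤ P := (FractionalIdeal.coeIdeal_le_coeIdeal _).mpr hCP
end

section
/- Let R be a Prüfer domain and P a nonzero prime ideal. If there is a finitely generated ideal I ⊆ P such that every maximal ideal containing I contains P, then there is a prime ideal Q ⊆ P with Q the radical of a finitely generated ideal such that every maximal ideal containing Q contains P. -/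
/-!
Localizations of a Prüfer domain at primes are valuation rings, so the primes inside any
maximal ideal form a chain. Let `Q ⊆ P` be a minimal prime over the finitely generated
ideal `I`. Any minimal prime `T` over `I` lies in a maximal ideal `M`; sharpness gives
`Q ⊆ P ⊆ M`, and as `T` and `Q` are comparable below `M`, minimality forces `T = Q`. So `Q` is
the only minimal prime over `I`, that is `Q = √I`.
-/

open FractionalIdeal nonZeroDivisors

namespace IsPrufer

variable {R : Type*} [CommRing R] [IsDomain R]

/-- With `x, y ∈ (a, b)⁻¹` and `a x + b y = 1`, take `r = a x` and `s = b y`. -/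
theorem exists_add_eq_one_dvd_mul (hR : IsPrufer R) (a b : R) :
    ∃ r s : R, r + s = 1 ∧ a ∣ b * r ∧ b ∣ a * s := by
  by_cases ha : a = 0
  · exact ⟨0, 1, zero_add 1, by simp, by simp [ha]⟩
  let f := algebraMap R (FractionRing R)
  have hf : Function.Injective f := IsFractionRing.injective R _
  have hspan : Ideal.span {a, b} ≠ ⊥ := fun h ↦
    ha (by simpa [h] using (Ideal.subset_span (by simp) : a ∈ Ideal.span {a, b}))
  obtain ⟨u, hu⟩ := hR _ hspan (Submodule.fg_span (Set.toFinite _))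
  have hinv : (Ideal.span {a, b} : FractionalIdeal R⁰ (FractionRing R)) * ↑u⁻¹ = 1 := by
    rw [← hu, Units.mul_inv]
  have hdecomp : (Ideal.span {a, b} : FractionalIdeal R⁰ (FractionRing R)) =
      spanSingleton R⁰ (f a) + spanSingleton R⁰ (f b) := by
    rw [Ideal.span_insert, coeIdeal_sup, coeIdeal_span_singleton, coeIdeal_span_singleton]
  have integral : ∀ c ∈ ({a, b} : Set R), ∀ z ∈ (↑u⁻¹ : FractionalIdeal R⁰ (FractionRing R)),
      ∃ t : R, f t = f c * z := fun c hc z hz ↦ (mem_one_iff _).mp <|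
    hinv ▸ mul_mem_mul (mem_coeIdeal_of_mem _ (Ideal.subset_span hc)) hz
  have hone : (1 : FractionRing R) ∈ spanSingleton R⁰ (f a) * ↑u⁻¹ +
      spanSingleton R⁰ (f b) * ↑u⁻¹ := by
    rw [← add_mul, ← hdecomp, hinv]; exact one_mem_one _
  obtain ⟨_, hax, _, hby, hxy⟩ := (mem_add _ _ _).mp hone
  obtain ⟨x, hx, rfl⟩ := mem_singleton_mul.mp hax
  obtain ⟨y, hy, rfl⟩ := mem_singleton_mul.mp hby
  obtain ⟨r, hr⟩ := integral a (by simp) x hx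
  obtain ⟨s, hs⟩ := integral b (by simp) y hy
  obtain ⟨t, ht⟩ := integral b (by simp) x hx
  obtain ⟨w, hw⟩ := integral a (by simp) y hy
  refine ⟨r, s, hf ?_, ⟨t, hf ?_⟩, ⟨w, hf ?_⟩⟩
  · rw [map_add, map_one, hr, hs, hxy]
  · rw [map_mul, map_mul, hr, ht]; ring
  · rw [map_mul, map_mul, hs, hw]; ring

theorem preValuationRing_of_isLocalization_atPrime (hR : IsPrufer R) (M : Ideal R) [M.IsPrime]
    (S : Type*) [CommRing S] [Algebra R S] [IsLocalization.AtPrime S M] : PreValuationRing S := by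
  have dvd_total (a b : R) : algebraMap R S a ∣ algebraMap R S b ∨
      algebraMap R S b ∣ algebraMap R S a := by
    obtain ⟨r, s, hrs, hr, hs⟩ := hR.exists_add_eq_one_dvd_mul a b
    have : r ∉ M ∨ s ∉ M := by
      by_contra! h
      exact M.primeCompl.one_mem (hrs ▸ M.add_mem h.1 h.2)
    rcases this with hrM | hsM
    · refine .inl <| ((IsLocalization.AtPrime.isUnit_to_map_iff S M r).mpr hrM).dvd_mul_right.mp ?_
      simpa using map_dvd (algebraMap R S) hr
    · refine .inr <| ((IsLocalization.AtPrime.isUnit_to_map_iff S M s).mpr hsM).dvd_mul_right.mp ?_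
      simpa using map_dvd (algebraMap R S) hs
  have associated_map (x : S) : ∃ a : R, Associated x (algebraMap R S a) := by
    obtain ⟨⟨a, t⟩, ht⟩ := IsLocalization.surj M.primeCompl x
    exact ⟨a, ⟨(IsLocalization.map_units S t).unit, ht⟩⟩
  refine PreValuationRing.iff_dvd_total.mpr ⟨fun x y ↦ ?_⟩
  obtain ⟨a, hx⟩ := associated_map x
  obtain ⟨b, hy⟩ := associated_map y
  rw [hx.dvd_iff_dvd_left, hx.dvd_iff_dvd_right, hy.dvd_iff_dvd_left, hy.dvd_iff_dvd_right]
  exact dvd_total a b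

end IsPrufer

theorem Ideal.isChain_isPrime_le_of_preValuationRing {R : Type*} [CommRing R] (M : Ideal R)
    [M.IsPrime] (S : Type*) [CommRing S] [Algebra R S] [IsLocalization.AtPrime S M]
    [PreValuationRing S] : IsChain (· ≤ ·) {p : Ideal R | p.IsPrime ∧ p ≤ M} := by
  rintro p ⟨hp, hpM⟩ q ⟨hq, hqM⟩ -
  have under_map {p : Ideal R} (hp : p.IsPrime) (hpM : p ≤ M) :
      (p.map (algebraMap R S)).under R = p :=
    have := hp
    Ideal.under_map_of_isLocalizationAtPrime M hpM
  rw [← under_map hp hpM, ← under_map hq hqM]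
  exact ((PreValuationRing.iff_ideal_total.mp ‹_›).total _ _).imp
    (Ideal.comap_mono ·) (Ideal.comap_mono ·)

theorem Ideal.radical_eq_of_mem_minimalPrimes {R : Type*} [CommRing R] {I Q : Ideal R}
    (hQ : Q ∈ I.minimalPrimes)
    (hchain : ∀ M : Ideal R, M.IsMaximal → IsChain (· ≤ ·) {p : Ideal R | p.IsPrime ∧ p ≤ M})
    (hle : ∀ M : Ideal R, M.IsMaximal → I ≤ M → Q ≤ M) : I.radical = Q := by
  suffices I.minimalPrimes = {Q} by rw [← Ideal.sInf_minimalPrimes, this, sInf_singleton]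
  refine Set.eq_singleton_iff_unique_mem.mpr ⟨hQ, fun T hT ↦ ?_⟩
  obtain ⟨M, hM, hTM⟩ := T.exists_le_maximal hT.isPrime.ne_top
  have hT' : Minimal (fun p : Ideal R ↦ p.IsPrime ∧ I ≤ p) T := hT
  have hQ' : Minimal (fun p : Ideal R ↦ p.IsPrime ∧ I ≤ p) Q := hQ
  rcases (hchain M hM).total ⟨hT.isPrime, hTM⟩ ⟨hQ.isPrime, hle M hM (hT.le.trans hTM)⟩
    with hTQ | hQT
  · exact hQ'.eq_of_le hT'.1 hTQ
  · exact hT'.eq_of_ge hQ'.1 hQT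

theorem exists_prime_radical_fg_of_sharp_general (R : Type*) [CommRing R] [IsDomain R]
    (hR : IsPrufer R) (P : Ideal R) (hP : P.IsPrime)
    (h : ∃ I : Ideal R, I.FG ∧ I ≤ P ∧
      ∀ M : Ideal R, M.IsMaximal → I ≤ M → P ≤ M) :
    ∃ Q : Ideal R, Q.IsPrime ∧ Q ≤ P ∧ (∃ J : Ideal R, J.FG ∧ J.radical = Q) ∧
      ∀ M : Ideal R, M.IsMaximal → Q ≤ M → P ≤ M := by
  obtain ⟨I, hIfg, hIP, hImax⟩ := h
  obtain ⟨Q, hQ, hQP⟩ := Ideal.exists_minimalPrimes_le hIP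
  have hchain (M : Ideal R) (hM : M.IsMaximal) :=
    have := hR.preValuationRing_of_isLocalization_atPrime M (Localization.AtPrime M)
    M.isChain_isPrime_le_of_preValuationRing (Localization.AtPrime M)
  have hrad : I.radical = Q := Ideal.radical_eq_of_mem_minimalPrimes hQ hchain
    fun M hM hIM ↦ hQP.trans (hImax M hM hIM)
  exact ⟨Q, hQ.isPrime, hQP, ⟨I, hIfg, hrad⟩,
    fun M hM hQM ↦ hImax M hM (Ideal.le_radical.trans (hrad ▸ hQM))⟩

/-- In a Prüfer domain, a sharp prime `P` contains a prime `Q` that is the radical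
of a finitely generated ideal, with every maximal ideal containing `Q` containing `P`. -/
theorem exists_prime_radical_fg_of_sharp (R : Type*) [CommRing R] [IsDomain R]
    (hR : IsPrufer R) (P : Ideal R) (hP : P.IsPrime) (h0 : P ≠ ⊥)
    (h : ∃ I : Ideal R, I.FG ∧ I ≤ P ∧
      ∀ M : Ideal R, M.IsMaximal → I ≤ M → P ≤ M) :
    ∃ Q : Ideal R, Q.IsPrime ∧ Q ≤ P ∧ (∃ J : Ideal R, J.FG ∧ J.radical = Q) ∧
      ∀ M : Ideal R, M.IsMaximal → Q ≤ M → P ≤ M :=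
  exists_prime_radical_fg_of_sharp_general R hR P hP h
end

section
/- Let R be a Prüfer domain and P a nonzero prime ideal. If there is a finitely generated ideal I ⊆ P such that every maximal ideal containing I contains P, then there is a finitely generated ideal J ⊆ P such that every ideal of R containing J is comparable (under inclusion) with P. -/
/-!
Take `J := I`. Localizations of a Prüfer domain at primes are valuation rings, so after
localizing at a maximal ideal `M ⊇ A` the ideals `P` and `A` become comparable; since
`M ⊇ I` forces `P ⊆ M`, the prime `P` is recovered from its localization, and `A ⊄ P` leaves
only `P_M ⊆ A_M`. At a maximal ideal `M ⊉ A` we have `A_M = R_M`. Hence `P ⊆ A` locally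
everywhere, so globally.
-/

open Ideal

/-- Writing `1 = r u + s v` with `u, v` in the inverse of `(r, s)`, take `a = r u`, `b = s u`,
`c = r v`, `d = s v`. -/
theorem IsInvertibleIdeal.exists_of_span_pair {R : Type*} [CommRing R] [IsDomain R] {r s : R}
    (h : IsInvertibleIdeal R (span {r, s})) :
    ∃ a b c d : R, a + d = 1 ∧ s * a = r * b ∧ r * d = s * c := by
  obtain ⟨u, hu⟩ := h
  set K := FractionRing R
  set g := algebraMap R K
  have hmul : (span {r, s} : FractionalIdeal (nonZeroDivisors R) K) * ↑u⁻¹ = 1 := by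
    rw [← hu, Units.mul_inv]
  have mem_mul : ∀ x ∈ span {r, s}, ∀ y ∈ (↑u⁻¹ : FractionalIdeal (nonZeroDivisors R) K),
      ∃ c : R, g c = g x * y := by
    intro x hx y hy
    rw [← FractionalIdeal.mem_one_iff, ← hmul]
    exact FractionalIdeal.mul_mem_mul ((FractionalIdeal.mem_coeIdeal _).2 ⟨x, hx, rfl⟩) hy
  have h1 : (1 : K) ∈ (span {r, s} : FractionalIdeal (nonZeroDivisors R) K) * ↑u⁻¹ := by
    rw [hmul]; exact FractionalIdeal.one_mem_one _
  rw [← FractionalIdeal.mem_coe, FractionalIdeal.coe_mul, FractionalIdeal.coe_coeIdeal,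
    IsLocalization.coeSubmodule_span, Set.image_pair, Submodule.span_insert, Submodule.sup_mul,
    Submodule.mem_sup] at h1
  obtain ⟨x, hx, y, hy, hxy⟩ := h1
  obtain ⟨u', hu', rfl⟩ := Submodule.mem_span_singleton_mul.1 hx
  obtain ⟨v', hv', rfl⟩ := Submodule.mem_span_singleton_mul.1 hy
  obtain ⟨a, ha⟩ := mem_mul r (subset_span (by simp)) u' hu'
  obtain ⟨b, hb⟩ := mem_mul s (subset_span (by simp)) u' hu'
  obtain ⟨c, hc⟩ := mem_mul r (subset_span (by simp)) v' hv'
  obtain ⟨d, hd⟩ := mem_mul s (subset_span (by simp)) v' hv'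
  have hg : Function.Injective g := IsFractionRing.injective R K
  refine ⟨a, b, c, d, hg ?_, hg ?_, hg ?_⟩
  · rw [map_add, ha, hd, map_one, hxy]
  · rw [map_mul, map_mul, ha, hb]; ring
  · rw [map_mul, map_mul, hc, hd]; ring

theorem IsPrufer.dvd_total_algebraMap_localization {R : Type*} [CommRing R] [IsDomain R]
    (hR : IsPrufer R) (M : Ideal R) [M.IsPrime] (r s : R) :
    algebraMap R (Localization.AtPrime M) r ∣ algebraMap R (Localization.AtPrime M) s ∨
      algebraMap R (Localization.AtPrime M) s ∣ algebraMap R (Localization.AtPrime M) r := by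
  set f := algebraMap R (Localization.AtPrime M)
  rcases eq_or_ne r 0 with rfl | hr
  · exact Or.inr (by simp)
  have hspan : span {r, s} ≠ ⊥ := fun h ↦ hr <| by
    simpa [h] using (subset_span (by simp) : r ∈ span {r, s})
  obtain ⟨a, b, c, d, had, hsa, hrd⟩ :=
    (hR _ hspan (Submodule.fg_span (Set.toFinite _))).exists_of_span_pair
  have hunit : ∀ x, x ∉ M → IsUnit (f x) := fun x hx ↦
    (IsLocalization.AtPrime.isUnit_to_map_iff _ M x).2 hx
  by_cases haM : a ∈ M
  · have hdM : d ∉ M := fun hdM ↦ M.one_notMem (had ▸ M.add_mem haM hdM)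
    refine Or.inr ((hunit d hdM).dvd_mul_right.1 ⟨f c, ?_⟩)
    rw [← map_mul, hrd, map_mul]
  · refine Or.inl ((hunit a haM).dvd_mul_right.1 ⟨f b, ?_⟩)
    rw [← map_mul, hsa, map_mul]

theorem IsPrufer.valuationRing_localization {R : Type*} [CommRing R] [IsDomain R]
    (hR : IsPrufer R) (M : Ideal R) [M.IsPrime] : ValuationRing (Localization.AtPrime M) := by
  rw [ValuationRing.iff_dvd_total]
  refine ⟨fun x y ↦ ?_⟩
  obtain ⟨⟨r, m⟩, hx⟩ := IsLocalization.surj M.primeCompl x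
  obtain ⟨⟨s, n⟩, hy⟩ := IsLocalization.surj M.primeCompl y
  have hxr : Associated x (algebraMap R _ r) :=
    hx ▸ associated_mul_unit_right _ _ (IsLocalization.map_units _ m)
  have hys : Associated y (algebraMap R _ s) :=
    hy ▸ associated_mul_unit_right _ _ (IsLocalization.map_units _ n)
  rw [hxr.dvd_iff_dvd_left, hxr.dvd_iff_dvd_right, hys.dvd_iff_dvd_left, hys.dvd_iff_dvd_right]
  exact hR.dvd_total_algebraMap_localization M r s

theorem Ideal.map_localization_le_map_of_not_le {R : Type*} [CommRing R] [IsDomain R]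
    {M P A : Ideal R} [M.IsPrime] [P.IsPrime] [ValuationRing (Localization.AtPrime M)]
    (hPM : P ≤ M) (hAP : ¬ A ≤ P) :
    P.map (algebraMap R (Localization.AtPrime M)) ≤
      A.map (algebraMap R (Localization.AtPrime M)) := by
  refine ((ValuationRing.le_total_ideal _).total _ _).resolve_right fun hAP' ↦ hAP ?_
  calc A ≤ (A.map (algebraMap R (Localization.AtPrime M))).comap _ := le_comap_map
    _ ≤ (P.map (algebraMap R (Localization.AtPrime M))).comap _ := comap_mono hAP'
    _ = P := under_map_of_isLocalizationAtPrime _ hPM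

theorem exists_fg_comparable_of_sharp_general (R : Type*) [CommRing R] [IsDomain R]
    (hR : IsPrufer R) (P : Ideal R) (hP : P.IsPrime)
    (h : ∃ I : Ideal R, I.FG ∧ I ≤ P ∧
      ∀ M : Ideal R, M.IsMaximal → I ≤ M → P ≤ M) :
    ∃ J : Ideal R, J.FG ∧ J ≤ P ∧ ∀ A : Ideal R, J ≤ A → A ≤ P ∨ P ≤ A := by
  obtain ⟨I, hIfg, hIP, hImax⟩ := h
  refine ⟨I, hIfg, hIP, fun A hIA ↦ or_iff_not_imp_left.2 fun hAP ↦ ?_⟩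
  refine le_of_localization_maximal fun M hM ↦ ?_
  by_cases hAM : A ≤ M
  · have := hR.valuationRing_localization M
    exact map_localization_le_map_of_not_le (hImax M hM (hIA.trans hAM)) hAP
  · rw [IsLocalization.AtPrime.map_eq_top_of_not_le _ hAM]
    exact le_top

/-- In a Prüfer domain, a sharp prime `P` contains a finitely generated ideal `J`
such that every ideal containing `J` is comparable with `P`. -/
theorem exists_fg_comparable_of_sharp (R : Type*) [CommRing R] [IsDomain R]
    (hR : IsPrufer R) (P : Ideal R) (hP : P.IsPrime) (h0 : P ≠ ⊥)
    (h : ∃ I : Ideal R, I.FG ∧ I ≤ P ∧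
      ∀ M : Ideal R, M.IsMaximal → I ≤ M → P ≤ M) :
    ∃ J : Ideal R, J.FG ∧ J ≤ P ∧ ∀ A : Ideal R, J ≤ A → A ≤ P ∨ P ≤ A :=
  exists_fg_comparable_of_sharp_general R hR P hP h
end

section
/- Let R be a Prüfer domain and P a nonzero prime ideal. If I ⊆ P is a finitely generated ideal such that every ideal of R containing I is comparable with P, then P contains a unique minimal prime over I, namely √I, and in particular √I is the radical of a finitely generated ideal contained in P. -/
/-- In a Prüfer domain, two primes contained in a common prime are comparable. -/
lemma primes_le_comparable (R : Type*) [CommRing R] [IsDomain R]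
    (hR : IsPrufer R) (P Q₁ Q₂ : Ideal R) (hP : P.IsPrime)
    (h1 : Q₁.IsPrime) (h2 : Q₂.IsPrime) (h1P : Q₁ ≤ P) (h2P : Q₂ ≤ P) :
    Q₁ ≤ Q₂ ∨ Q₂ ≤ Q₁ := by
  by_contra hcon
  push_neg at hcon
  obtain ⟨h12, h21⟩ := hcon
  obtain ⟨a, ha1, ha2⟩ := SetLike.not_le_iff_exists.mp h12
  obtain ⟨b, hb2, hb1⟩ := SetLike.not_le_iff_exists.mp h21
  have ha0 : a ≠ 0 := fun h => ha2 (h ▸ Q₂.zero_mem)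
  set K := FractionRing R
  set J : Ideal R := Ideal.span {a, b} with hJdef
  have haJ : a ∈ J := Ideal.subset_span (by simp)
  have hbJ : b ∈ J := Ideal.subset_span (by simp)
  have hJ0 : J ≠ ⊥ := by
    intro h
    exact ha0 ((Ideal.mem_bot).mp (h ▸ haJ))
  have hJfg : J.FG := Submodule.fg_span (Set.toFinite _)
  obtain ⟨J', hJ'⟩ := isUnit_iff_exists_inv.mp (hR J hJ0 hJfg)
  -- 1 ∈ ↑J * J'
  have h1mem : (1 : K) ∈ (J : FractionalIdeal (nonZeroDivisors R) K) * J' := by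
    rw [hJ']; exact FractionalIdeal.one_mem_one _
  have hJeq : (J : FractionalIdeal (nonZeroDivisors R) K)
      = FractionalIdeal.spanSingleton (nonZeroDivisors R) (algebraMap R K a)
        + FractionalIdeal.spanSingleton (nonZeroDivisors R) (algebraMap R K b) := by
    rw [hJdef, Ideal.span_insert, FractionalIdeal.coeIdeal_sup,
      FractionalIdeal.coeIdeal_span_singleton, FractionalIdeal.coeIdeal_span_singleton]
  rw [hJeq, add_mul] at h1mem
  obtain ⟨x, hx, y, hy, hxy⟩ := (FractionalIdeal.mem_add _ _ _).mp h1mem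
  obtain ⟨x', hx', rfl⟩ := FractionalIdeal.mem_singleton_mul.mp hx
  obtain ⟨y', hy', rfl⟩ := FractionalIdeal.mem_singleton_mul.mp hy
  -- products of elements of J' with elements of J land in R
  have key : ∀ z ∈ J', ∀ c ∈ J, ∃ r : R, algebraMap R K r = algebraMap R K c * z := by
    intro z hz c hc
    have : algebraMap R K c * z ∈ (J : FractionalIdeal (nonZeroDivisors R) K) * J' := by
      exact FractionalIdeal.mul_mem_mul (FractionalIdeal.mem_coeIdeal_of_mem _ hc) hz
    rw [hJ'] at this
    exact (FractionalIdeal.mem_one_iff _).mp this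
  obtain ⟨u, hu⟩ := key x' hx' a haJ
  obtain ⟨c, hc⟩ := key x' hx' b hbJ
  obtain ⟨v, hv⟩ := key y' hy' b hbJ
  obtain ⟨d, hd⟩ := key y' hy' a haJ
  have hinj : Function.Injective (algebraMap R K) := IsFractionRing.injective R K
  -- u + v = 1
  have huv : u + v = 1 := by
    apply hinj
    rw [map_add, map_one, hu, hv, hxy]
  -- u * b = c * a
  have hub : u * b = c * a := by
    apply hinj
    rw [map_mul, map_mul, hu, hc]; ring
  -- v * a = d * b
  have hva : v * a = d * b := by
    apply hinj
    rw [map_mul, map_mul, hv, hd]; ring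
  have huQ1 : u ∈ Q₁ := by
    have : u * b ∈ Q₁ := hub ▸ Q₁.mul_mem_left c ha1
    exact (h1.mem_or_mem this).resolve_right hb1
  have hvQ2 : v ∈ Q₂ := by
    have : v * a ∈ Q₂ := hva ▸ Q₂.mul_mem_left d hb2
    exact (h2.mem_or_mem this).resolve_right ha2
  have : (1 : R) ∈ P := huv ▸ P.add_mem (h1P huQ1) (h2P hvQ2)
  exact hP.ne_top ((Ideal.eq_top_iff_one P).mpr this)

/-- In a Prüfer domain, if every ideal containing a finitely generated `I ⊆ P` is
comparable with the prime `P`, then `√I` is the unique minimal prime over `I`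
and `√I ⊆ P`. -/
theorem radical_unique_minimal_prime_of_comparable (R : Type*) [CommRing R] [IsDomain R]
    (hR : IsPrufer R) (P : Ideal R) (hP : P.IsPrime) (h0 : P ≠ ⊥)
    (I : Ideal R) (hIfg : I.FG) (hIP : I ≤ P)
    (hcomp : ∀ A : Ideal R, I ≤ A → A ≤ P ∨ P ≤ A) :
    I.radical.IsPrime ∧ I.minimalPrimes = {I.radical} ∧ I.radical ≤ P := by
  -- every minimal prime over I is ≤ P
  have hminle : ∀ Q ∈ I.minimalPrimes, Q ≤ P := by
    intro Q hQ
    rcases hcomp Q hQ.1.2 with h | h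
    · exact h
    · exact hQ.2 ⟨hP, hIP⟩ h
  -- there exists a minimal prime
  obtain ⟨Q, hQ, hQP⟩ := Ideal.exists_minimalPrimes_le (J := P) hIP
  -- minimal primes are unique
  have huniq : I.minimalPrimes = {Q} := by
    ext Q'
    simp only [Set.mem_singleton_iff]
    constructor
    · intro hQ'
      rcases primes_le_comparable R hR P Q' Q hP hQ'.1.1 hQ.1.1 (hminle _ hQ') hQP with h | h
      · exact le_antisymm h (hQ.2 hQ'.1 h)
      · exact le_antisymm (hQ'.2 hQ.1 h) h
    · rintro rfl; exact hQ
  have hrad : I.radical = Q := by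
    rw [← Ideal.sInf_minimalPrimes, huniq, sInf_singleton]
  refine ⟨hrad ▸ hQ.1.1, ?_, hrad ▸ hQP⟩
  rw [huniq, hrad]
end

section
/- Let R be a Prüfer domain and P a nonzero prime ideal that is sharp, i.e., there is a finitely generated ideal I ⊆ P contained only in the maximal ideals that contain P. Then for every prime Q of R properly containing P there is a finitely generated ideal J with P ⊊ J ⊆ Q; that is, P is antesharp. -/
open scoped nonZeroDivisors

open FractionalIdeal in
theorem exists_add_eq_one_dvd_of_isInvertibleIdeal_span_pair {R : Type*} [CommRing R]
    [IsDomain R] {x y : R} (hxy : IsInvertibleIdeal R (Ideal.span {x, y})) :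
    ∃ a b : R, a + b = 1 ∧ x ∣ a * y ∧ y ∣ b * x := by
  set f := algebraMap R (FractionRing R)
  obtain ⟨B, hAB⟩ := hxy.exists_right_inv
  have hA : ((Ideal.span {x, y} : Ideal R) : FractionalIdeal R⁰ (FractionRing R)) =
      spanSingleton R⁰ (f x) + spanSingleton R⁰ (f y) := by
    rw [Ideal.span_insert, coeIdeal_sup, coeIdeal_span_singleton, coeIdeal_span_singleton]
  have integral : ∀ r ∈ ({x, y} : Set R), ∀ s ∈ B, ∃ w : R, f w = f r * s := fun r hr s hs =>
    (mem_one_iff R⁰).mp <| hAB ▸ mul_mem_mul (mem_coeIdeal_of_mem R⁰ (Ideal.subset_span hr)) hs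
  have hone : (1 : FractionRing R) ∈ spanSingleton R⁰ (f x) * B ⊔ spanSingleton R⁰ (f y) * B := by
    rw [sup_eq_add, ← add_mul, ← hA, hAB]
    exact one_mem_one R⁰
  -- `1 = x s + y t` with `s, t ∈ B`; the witnesses are `a = x s` and `b = y t`.
  obtain ⟨_, hu, _, hv, huv⟩ := Submodule.mem_sup.mp hone
  obtain ⟨s, hs, rfl⟩ := mem_singleton_mul.mp hu
  obtain ⟨t, ht, rfl⟩ := mem_singleton_mul.mp hv
  obtain ⟨a, ha⟩ := integral x (by simp) s hs
  obtain ⟨c, hc⟩ := integral y (by simp) s hs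
  obtain ⟨b, hb⟩ := integral y (by simp) t ht
  obtain ⟨d, hd⟩ := integral x (by simp) t ht
  have hf : Function.Injective f := IsFractionRing.injective R (FractionRing R)
  refine ⟨a, b, hf ?_, ⟨c, hf ?_⟩, ⟨d, hf ?_⟩⟩
  · rw [map_add, map_one, ha, hb, ← huv]
  · rw [map_mul, map_mul, ha, hc]; ring
  · rw [map_mul, map_mul, hb, hd]; ring

theorem Ideal.mem_of_add_eq_one_of_dvd {R : Type*} [CommRing R] {P J : Ideal R} [P.IsPrime]
    (hJ : ∀ M : Ideal R, M.IsMaximal → J ≤ M → P ≤ M) {x p a b : R} (hxJ : x ∈ J)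
    (hxP : x ∉ P) (hp : p ∈ P) (hab : a + b = 1) (ha : x ∣ a * p) (hb : p ∣ b * x) :
    p ∈ J := by
  by_contra hpJ
  have hcolon : J.colon (Ideal.span {p}) ≠ ⊤ := fun htop =>
    hpJ (one_mul p ▸ Ideal.mem_colon_span_singleton.mp (htop ▸ Submodule.mem_top (x := 1)))
  obtain ⟨M, hM, hcolonM⟩ := Ideal.exists_le_maximal _ hcolon
  have hJM : J ≤ M := fun j hj =>
    hcolonM (Ideal.mem_colon_span_singleton.mpr (J.mul_mem_right p hj))
  obtain ⟨c, hc⟩ := ha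
  have haM : a ∈ M :=
    hcolonM (Ideal.mem_colon_span_singleton.mpr (hc ▸ J.mul_mem_right c hxJ))
  obtain ⟨d, hd⟩ := hb
  have hbP : b ∈ P :=
    ((Ideal.IsPrime.mem_or_mem ‹_›) (hd ▸ P.mul_mem_right d hp)).resolve_right hxP
  exact hM.ne_top ((M.eq_top_iff_one).mpr (hab ▸ M.add_mem haM (hJ M hM hJM hbP)))

theorem antesharp_of_sharp_general (R : Type*) [CommRing R] [IsDomain R]
    (hR : IsPrufer R) (P : Ideal R) (hP : P.IsPrime)
    (hsharp : IsSharp R P) :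
    ∀ Q : Ideal R, Q.IsPrime → P < Q →
      ∃ J : Ideal R, J.FG ∧ P < J ∧ J ≤ Q := by
  obtain ⟨I, hIfg, hIP, hImax⟩ := hsharp
  intro Q _ hPQ
  obtain ⟨x, hxQ, hxP⟩ := SetLike.exists_of_lt hPQ
  have hxJ : x ∈ I ⊔ Ideal.span {x} := Ideal.mem_sup_right (Ideal.mem_span_singleton_self x)
  have hx0 : x ≠ 0 := fun h => hxP (h ▸ P.zero_mem)
  have hPJ : P ≤ I ⊔ Ideal.span {x} := fun p hp => by
    have hne : Ideal.span {x, p} ≠ ⊥ := fun h =>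
      hx0 (by simpa [h] using (Ideal.subset_span (by simp) : x ∈ Ideal.span {x, p}))
    obtain ⟨a, b, hab, ha, hb⟩ := exists_add_eq_one_dvd_of_isInvertibleIdeal_span_pair
      (hR _ hne (Submodule.fg_span (Set.toFinite _)))
    exact Ideal.mem_of_add_eq_one_of_dvd (fun M hM hJM => hImax M hM (le_sup_left.trans hJM))
      hxJ hxP hp hab ha hb
  refine ⟨I ⊔ Ideal.span {x}, Submodule.FG.sup hIfg (Submodule.fg_span_singleton x),
    hPJ.lt_of_ne fun h => hxP (h ▸ hxJ), sup_le (hIP.trans hPQ.le) ?_⟩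
  exact (Ideal.span_singleton_le_iff_mem Q).mpr hxQ

/-- In a Prüfer domain a sharp prime is antesharp: every prime properly containing
`P` contains a finitely generated ideal properly containing `P`. -/
theorem antesharp_of_sharp (R : Type*) [CommRing R] [IsDomain R]
    (hR : IsPrufer R) (P : Ideal R) (hP : P.IsPrime) (h0 : P ≠ ⊥)
    (hsharp : IsSharp R P) :
    ∀ Q : Ideal R, Q.IsPrime → P < Q →
      ∃ J : Ideal R, J.FG ∧ P < J ∧ J ≤ Q :=
  antesharp_of_sharp_general R hR P hP hsharp
end

section
/- Let R be a Prüfer domain and let M be a branched maximal ideal of R (i.e., M admits a proper M-primary ideal). If M is not idempotent (M ≠ M²), then M is finitely generated, hence invertible and divisorial, provided M is the radical of a finitely generated ideal. -/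
namespace Ideal

variable {R : Type*} [CommRing R]

theorem mem_of_mul_mem_of_notMem_radical {M C : Ideal R} (hM : M.IsMaximal) (hC : C.radical = M)
    {y x : R} (h : y * x ∈ C) (hy : y ∉ M) : x ∈ C :=
  ((isPrimary_iff.mp (isPrimary_of_isMaximal_radical (hC ▸ hM))).2 (mul_comm y x ▸ h)).resolve_right
    (hC ▸ hy)

theorem radical_mul_self {P : Ideal R} (hP : P.IsPrime) : (P * P).radical = P := by
  rw [radical_mul, hP.radical, inf_idem]

theorem mem_of_add_eq_one_of_mul_eq {M C : Ideal R} (hM : M.IsMaximal) (hC : C.radical = M)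
    {a x r s t w : R} (haC : a ∈ C) (ha : a ∉ M * M) (hx : x ∈ M)
    (hrs : r + s = 1) (hr : r * x = a * t) (hs : s * a = x * w) : x ∈ C := by
  by_cases hrM : r ∈ M
  swap
  · exact mem_of_mul_mem_of_notMem_radical hM hC (hr ▸ mul_mem_right t C haC) hrM
  have hsM : s ∉ M := fun hsM => hM.ne_top ((eq_top_iff_one _).mpr (hrs ▸ add_mem hrM hsM))
  have hwM : w ∉ M := fun hwM =>
    ha (mem_of_mul_mem_of_notMem_radical hM (radical_mul_self hM.isPrime)
      (hs ▸ mul_mem_mul hx hwM) hsM)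
  exact mem_of_mul_mem_of_notMem_radical hM hC (mul_comm w x ▸ hs ▸ mul_mem_left C s haC) hwM

end Ideal

section FractionalIdeal

variable {R : Type*} [CommRing R] [IsDomain R]

open FractionalIdeal

local notation "𝔽" R => FractionalIdeal (nonZeroDivisors R) (FractionRing R)

theorem IsInvertibleIdeal.exists_mul_eq_one {I : Ideal R} (h : IsInvertibleIdeal R I) :
    ∃ J : 𝔽 R, I * J = 1 :=
  ⟨_, h.mul_val_inv⟩

theorem IsInvertibleIdeal.exists_add_eq_one_of_span_pair {a x : R}
    (h : IsInvertibleIdeal R (Ideal.span {a, x})) :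
    ∃ r s t w : R, r + s = 1 ∧ r * x = a * t ∧ s * a = x * w := by
  obtain ⟨J, hJ⟩ := h.exists_mul_eq_one
  have hspan : ((Ideal.span {a, x} : Ideal R) : 𝔽 R) =
      spanSingleton _ (algebraMap R _ a) + spanSingleton _ (algebraMap R _ x) := by
    rw [Ideal.span_insert, coeIdeal_sup, coeIdeal_span_singleton, coeIdeal_span_singleton]
  have hint : ∀ c ∈ Ideal.span {a, x}, ∀ u ∈ J, ∃ r : R, algebraMap R _ r = algebraMap R _ c * u :=
    fun c hc u hu => (mem_one_iff _).mp (hJ ▸ mul_mem_mul (mem_coeIdeal_of_mem _ hc) hu)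
  have h1 : (1 : FractionRing R) ∈ spanSingleton _ (algebraMap R _ a) * J +
      spanSingleton _ (algebraMap R _ x) * J := by
    rw [← add_mul, ← hspan, hJ]
    exact one_mem_one _
  obtain ⟨_, hp, _, hq, hpq⟩ := (mem_add _ _ _).mp h1
  obtain ⟨p, hpJ, rfl⟩ := mem_singleton_mul.mp hp
  obtain ⟨q, hqJ, rfl⟩ := mem_singleton_mul.mp hq
  have ha : a ∈ Ideal.span {a, x} := Ideal.subset_span (by simp)
  have hx : x ∈ Ideal.span {a, x} := Ideal.subset_span (by simp)
  obtain ⟨r, hr⟩ := hint a ha p hpJ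
  obtain ⟨t, ht⟩ := hint x hx p hpJ
  obtain ⟨w, hw⟩ := hint a ha q hqJ
  obtain ⟨s, hs⟩ := hint x hx q hqJ
  have hf := IsFractionRing.injective R (FractionRing R)
  refine ⟨r, s, t, w, hf ?_, hf ?_, hf ?_⟩
  · simpa only [map_add, map_one, hr, hs] using hpq
  · simp only [map_mul, hr, ht]; ring
  · simp only [map_mul, hs, hw]; ring

theorem IsInvertibleIdeal.isDivisorial {I : Ideal R} (h : IsInvertibleIdeal R I) :
    IsDivisorial R I := by
  obtain ⟨J, hJ⟩ := h.exists_mul_eq_one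
  rw [IsDivisorial, ← eq_one_div_of_mul_eq_one_right _ _ hJ]
  exact (eq_one_div_of_mul_eq_one_right _ _ ((mul_comm _ _).trans hJ)).symm

end FractionalIdeal

theorem IsPrufer.eq_of_radical_eq {R : Type*} [CommRing R] [IsDomain R] (hR : IsPrufer R)
    {M C : Ideal R} (hM : M.IsMaximal) (hC : C.radical = M) {a : R} (haC : a ∈ C)
    (ha : a ∉ M * M) : C = M := by
  refine le_antisymm (hC ▸ Ideal.le_radical) fun x hx => ?_
  have hne : Ideal.span {a, x} ≠ ⊥ :=
    (Submodule.ne_bot_iff _).mpr ⟨a, Ideal.subset_span (by simp), fun h => ha (h ▸ zero_mem _)⟩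
  obtain ⟨r, s, t, w, hrs, hr, hs⟩ :=
    (hR _ hne (Submodule.fg_span (Set.toFinite _))).exists_add_eq_one_of_span_pair
  exact Ideal.mem_of_add_eq_one_of_mul_eq hM hC haC ha hx hrs hr hs

theorem maximal_branched_not_idempotent_general (R : Type*) [CommRing R] [IsDomain R]
    (hR : IsPrufer R) (M : Ideal R) (hM : M.IsMaximal)
    (hni : M * M ≠ M)
    (hrad : ∃ B : Ideal R, B.FG ∧ B.radical = M) :
    M.FG ∧ IsInvertibleIdeal R M ∧ IsDivisorial R M := by
  obtain ⟨B, hBfg, hBrad⟩ := hrad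
  obtain ⟨a, haM, ha⟩ := SetLike.exists_of_lt (lt_of_le_of_ne Ideal.mul_le_right hni)
  have hC : (B ⊔ Ideal.span {a}).radical = M := by
    refine le_antisymm ?_ (hBrad ▸ Ideal.radical_mono le_sup_left)
    exact hM.isPrime.radical_le_iff.mpr
      (sup_le (hBrad ▸ Ideal.le_radical) (Ideal.span_singleton_le_iff_mem _ |>.mpr haM))
  have hMC : B ⊔ Ideal.span {a} = M :=
    hR.eq_of_radical_eq hM hC (Ideal.mem_sup_right (Ideal.mem_span_singleton_self a)) ha
  have hMfg : M.FG := hMC ▸ Submodule.FG.sup hBfg (Submodule.fg_span_singleton a)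
  have hne : M ≠ ⊥ := (Submodule.ne_bot_iff _).mpr ⟨a, haM, fun h => ha (h ▸ zero_mem _)⟩
  have hinv := hR M hne hMfg
  exact ⟨hMfg, hinv, hinv.isDivisorial⟩

/-- A branched non-idempotent maximal ideal of a Prüfer domain that is the radical
of a finitely generated ideal is finitely generated, invertible and divisorial. -/
theorem maximal_branched_not_idempotent (R : Type*) [CommRing R] [IsDomain R]
    (hR : IsPrufer R) (M : Ideal R) (hM : M.IsMaximal)
    (hbr : ∃ Q : Ideal R, Q.IsPrimary ∧ Q.radical = M ∧ Q ≠ M)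
    (hni : M * M ≠ M)
    (hrad : ∃ B : Ideal R, B.FG ∧ B.radical = M) :
    M.FG ∧ IsInvertibleIdeal R M ∧ IsDivisorial R M :=
  maximal_branched_not_idempotent_general R hR M hM hni hrad
end

section
/- Let R be a Prüfer domain, M a branched maximal ideal that is idempotent and sharp (the radical of a finitely generated ideal). Then every M-primary ideal Q properly contained in M that is not divisorial has the form Q = IM for some finitely generated M-primary ideal I. -/
section LocalGlobal

variable {R M : Type*} [CommRing R] [AddCommGroup M] [Module R M]

theorem Submodule.mem_of_forall_isMaximal_exists_smul_mem {N : Submodule R M} {x : M}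
    (h : ∀ P : Ideal R, P.IsMaximal → ∃ s ∉ P, s • x ∈ N) : x ∈ N := by
  suffices N.colon {x} = ⊤ by simpa using (N.colon {x}).eq_top_iff_one.mp this
  by_contra hne
  obtain ⟨P, hP, hle⟩ := Ideal.exists_le_maximal _ hne
  obtain ⟨s, hsP, hs⟩ := h P hP
  exact hsP (hle (Submodule.mem_colon_singleton.mpr hs))

theorem Submodule.exists_notMem_forall_smul_mem_of_fg {N I : Submodule R M} {P : Ideal R}
    (hP : P.IsPrime) (hI : I.FG) (h : ∀ x ∈ I, ∃ s ∉ P, s • x ∈ N) :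
    ∃ s ∉ P, ∀ x ∈ I, s • x ∈ N := by
  induction I, hI using Submodule.fg_induction with
  | singleton x =>
    obtain ⟨s, hsP, hs⟩ := h x (mem_span_singleton_self x)
    refine ⟨s, hsP, fun y hy => ?_⟩
    obtain ⟨r, rfl⟩ := mem_span_singleton.mp hy
    rw [smul_comm]
    exact N.smul_mem r hs
  | sup I₁ I₂ _ _ h₁ h₂ =>
    obtain ⟨s₁, hs₁P, hs₁⟩ := h₁ fun x hx => h x (mem_sup_left hx)
    obtain ⟨s₂, hs₂P, hs₂⟩ := h₂ fun x hx => h x (mem_sup_right hx)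
    refine ⟨s₁ * s₂, fun hs => (hP.mem_or_mem hs).elim hs₁P hs₂P, fun y hy => ?_⟩
    obtain ⟨y₁, hy₁, y₂, hy₂, rfl⟩ := mem_sup.mp hy
    rw [smul_add, mul_smul, mul_smul, smul_comm s₁ s₂ y₁]
    exact N.add_mem (N.smul_mem s₂ (hs₁ y₁ hy₁)) (N.smul_mem s₁ (hs₂ y₂ hy₂))

end LocalGlobal

namespace Ideal

variable {R : Type*} [CommRing R]

theorem IsPrimary.mem_of_mul_mem_of_notMem_radical {Q : Ideal R} (hQ : Q.IsPrimary) {x y : R}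
    (h : x * y ∈ Q) (hy : y ∉ Q.radical) : x ∈ Q :=
  ((isPrimary_iff.mp hQ).2 h).resolve_right hy

theorem exists_notMem_forall_mul_mem_of_fg_le_of_radical_eq {M I Q J : Ideal R}
    (hM : M.IsMaximal) (hIfg : I.FG) (hIQ : I ≤ Q) (hIrad : I.radical = M)
    (h : ∀ q ∈ Q, ∃ s ∉ M, s * q ∈ J) : ∃ s ∉ M, ∀ q ∈ Q, s * q ∈ J := by
  obtain ⟨s, hsM, hs⟩ :=
    Submodule.exists_notMem_forall_smul_mem_of_fg hM.isPrime hIfg fun i hi => h i (hIQ hi)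
  refine ⟨s, hsM, fun q hq => Submodule.mem_of_forall_isMaximal_exists_smul_mem fun N hN => ?_⟩
  by_cases hNM : N = M
  · obtain ⟨t, htM, ht⟩ := h q hq
    refine ⟨t, hNM ▸ htM, ?_⟩
    rw [smul_eq_mul, mul_left_comm]
    exact J.mul_mem_left s ht
  · have hIN : ¬ I ≤ N := fun hle =>
      hNM (hM.eq_of_le hN.ne_top (hIrad ▸ hN.isPrime.radical_le_iff.mpr hle)).symm
    obtain ⟨i, hiI, hiN⟩ := SetLike.not_le_iff_exists.mp hIN
    refine ⟨i, hiN, ?_⟩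
    rw [smul_eq_mul, ← mul_assoc, mul_comm i s]
    exact J.mul_mem_right q (hs i hiI)

/-- `w ∈ (R : (R : Q))`, with the elements of `(R : Q)` written as fractions `s / d`. -/
def MemDivisorialClosure (Q : Ideal R) (w : R) : Prop :=
  ∀ s d : R, (∀ q ∈ Q, d ∣ s * q) → d ∣ s * w

end Ideal

open scoped nonZeroDivisors

theorem FractionalIdeal.algebraMap_div_mem_one_iff {R K : Type*} [CommRing R] [IsDomain R]
    [Field K] [Algebra R K] [IsFractionRing R K] {s d : R} (hd : d ≠ 0) :
    algebraMap R K s / algebraMap R K d ∈ (1 : FractionalIdeal R⁰ K) ↔ d ∣ s := by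
  have hd' : algebraMap R K d ≠ 0 := (map_ne_zero_iff _ (IsFractionRing.injective R K)).mpr hd
  rw [FractionalIdeal.mem_one_iff]
  constructor
  · rintro ⟨e, he⟩
    refine ⟨e, IsFractionRing.injective R K ?_⟩
    rw [map_mul, he, mul_div_cancel₀ _ hd']
  · rintro ⟨e, rfl⟩
    exact ⟨e, by rw [map_mul, mul_div_cancel_left₀ _ hd']⟩

section Domain

variable {R : Type*} [CommRing R] [IsDomain R]

theorem IsInvertibleIdeal.exists_notMem_dvd_mul_or_dvd_mul {a b : R}
    (h : IsInvertibleIdeal R (Ideal.span {a, b})) {P : Ideal R} (hP : P ≠ ⊤) :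
    ∃ s ∉ P, a ∣ s * b ∨ b ∣ s * a := by
  set K := FractionRing R
  have hinj := IsFractionRing.injective R K
  obtain ⟨X, hX⟩ := h.exists_right_inv
  have hint : ∀ c ∈ Ideal.span {a, b}, ∀ z ∈ X, ∃ e : R,
      algebraMap R K e = algebraMap R K c * z :=
    fun c hc z hz => (FractionalIdeal.mem_one_iff _).mp
      (hX ▸ FractionalIdeal.mul_mem_mul (FractionalIdeal.mem_coeIdeal_of_mem _ hc) hz)
  have h1 : (1 : K) ∈ (Ideal.span {a, b} : FractionalIdeal R⁰ K) * X :=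
    hX ▸ FractionalIdeal.one_mem_one _
  rw [Ideal.span_insert, FractionalIdeal.coeIdeal_sup, add_mul,
    FractionalIdeal.coeIdeal_span_singleton, FractionalIdeal.coeIdeal_span_singleton,
    FractionalIdeal.mem_add] at h1
  -- `1 = a z + b z'` with `z, z' ∈ X`, and `u = a z`, `v = b z'` lie in `R`; one is not in `P`.
  obtain ⟨_, hy, _, hy', hyy'⟩ := h1
  obtain ⟨z, hz, rfl⟩ := FractionalIdeal.mem_singleton_mul.mp hy
  obtain ⟨z', hz', rfl⟩ := FractionalIdeal.mem_singleton_mul.mp hy'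
  have ha : a ∈ Ideal.span {a, b} := Ideal.subset_span (by simp)
  have hb : b ∈ Ideal.span {a, b} := Ideal.subset_span (by simp)
  obtain ⟨u, hu⟩ := hint a ha z hz
  obtain ⟨v, hv⟩ := hint b hb z' hz'
  have huv : u + v = 1 := hinj (by rw [map_add, map_one, hu, hv, hyy'])
  by_cases huP : u ∈ P
  · have hvP : v ∉ P := fun hvP => hP ((P.eq_top_iff_one).mpr (huv ▸ P.add_mem huP hvP))
    obtain ⟨e, he⟩ := hint a ha z' hz'
    exact ⟨v, hvP, Or.inr ⟨e, hinj (by rw [map_mul, map_mul, hv, he]; ring)⟩⟩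
  · obtain ⟨e, he⟩ := hint b hb z hz
    exact ⟨u, huP, Or.inl ⟨e, hinj (by rw [map_mul, map_mul, hu, he]; ring)⟩⟩

theorem IsPrufer.exists_notMem_dvd_mul_or_dvd_mul (hR : IsPrufer R) {P : Ideal R}
    (hP : P ≠ ⊤) (a b : R) : ∃ s ∉ P, a ∣ s * b ∨ b ∣ s * a := by
  rcases eq_or_ne a 0 with rfl | ha
  · exact ⟨1, (P.ne_top_iff_one).mp hP, Or.inr (by simp)⟩
  refine IsInvertibleIdeal.exists_notMem_dvd_mul_or_dvd_mul (hR _ ?_ ?_) hP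
  · exact fun h => ha (by simpa [h] using (Ideal.subset_span (by simp) : a ∈ Ideal.span {a, b}))
  · exact Submodule.fg_span (Set.toFinite _)

theorem Ideal.exists_notMem_memDivisorialClosure_of_not_isDivisorial {Q : Ideal R}
    (hQ : ¬ IsDivisorial R Q) : ∃ w ∉ Q, Q.MemDivisorialClosure w := by
  set K := FractionRing R
  set F : FractionalIdeal R⁰ K := ↑Q
  have hQ0 : Q ≠ ⊥ := by
    rintro rfl
    exact hQ (by simp [IsDivisorial])
  have hF0 : F ≠ 0 := FractionalIdeal.coeIdeal_ne_zero.mpr hQ0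
  have hone : 1 ≤ 1 / F :=
    (FractionalIdeal.le_div_iff_mul_le hF0).mpr (by simpa using FractionalIdeal.coeIdeal_le_one)
  have hinv0 : 1 / F ≠ 0 := ne_bot_of_le_ne_bot one_ne_zero hone
  have hle : F ≤ 1 / (1 / F) :=
    (FractionalIdeal.le_div_iff_mul_le hinv0).mpr FractionalIdeal.mul_one_div_le_one
  obtain ⟨y, hyv, hyF⟩ := SetLike.exists_of_lt (lt_of_le_of_ne hle (Ne.symm hQ))
  have hmem := (FractionalIdeal.mem_div_iff_of_ne_zero hinv0).mp hyv
  obtain ⟨w, rfl⟩ := (FractionalIdeal.mem_one_iff R⁰).mp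
    (by simpa using hmem 1 (hone (FractionalIdeal.one_mem_one R⁰)))
  refine ⟨w, fun hw => hyF (FractionalIdeal.mem_coeIdeal_of_mem _ hw), fun s d hsd => ?_⟩
  rcases eq_or_ne d 0 with rfl | hd
  · obtain ⟨q, hq, hq0⟩ := Submodule.exists_mem_ne_zero_of_ne_bot hQ0
    have hs : s = 0 := by simpa [hq0] using zero_dvd_iff.mp (hsd q hq)
    simp [hs]
  have hsd' : algebraMap R K s / algebraMap R K d ∈ 1 / F := by
    refine (FractionalIdeal.mem_div_iff_of_ne_zero hF0).mpr fun x hx => ?_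
    obtain ⟨q, hq, rfl⟩ := (FractionalIdeal.mem_coeIdeal _).mp hx
    rw [div_mul_eq_mul_div, ← map_mul]
    exact (FractionalIdeal.algebraMap_div_mem_one_iff hd).mpr (hsd q hq)
  have hwsd := hmem _ hsd'
  rw [mul_div_assoc', ← map_mul, mul_comm w] at hwsd
  exact (FractionalIdeal.algebraMap_div_mem_one_iff hd).mp hwsd

theorem Ideal.MemDivisorialClosure.mul_mem {Q : Ideal R} {w : R} (hw : Q.MemDivisorialClosure w)
    (hR : IsPrufer R) {M I : Ideal R} (hM : M.IsMaximal) (hQ : Q.IsPrimary)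
    (hQrad : Q.radical = M) (hIfg : I.FG) (hIQ : I ≤ Q) (hIrad : I.radical = M) {x : R}
    (hx : x ∈ M) : w * x ∈ Q := by
  rcases eq_or_ne w 0 with rfl | hw0
  · simp
  by_contra hwx
  have hloc : ∀ q ∈ Q, ∃ s ∉ M, s * q ∈ Ideal.span {w * x} := by
    intro q hq
    obtain ⟨s, hsM, hdvd | ⟨t, ht⟩⟩ := hR.exists_notMem_dvd_mul_or_dvd_mul hM.ne_top (w * x) q
    · exact ⟨s, hsM, Ideal.mem_span_singleton.mpr hdvd⟩
    · refine absurd (hQ.mem_of_mul_mem_of_notMem_radical (y := s) ?_ (hQrad ▸ hsM)) hwx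
      rw [mul_comm (w * x) s, ht]
      exact Q.mul_mem_right t hq
  obtain ⟨s, hsM, hs⟩ :=
    Ideal.exists_notMem_forall_mul_mem_of_fg_le_of_radical_eq hM hIfg hIQ hIrad hloc
  have hdvd : w * x ∣ w * s :=
    mul_comm s w ▸ hw s (w * x) fun q hq => Ideal.mem_span_singleton.mp (hs q hq)
  exact hsM (M.mem_of_dvd ((mul_dvd_mul_iff_left hw0).mp hdvd) hx)

theorem IsPrufer.le_mul_of_isPrimary (hR : IsPrufer R) {M Q I : Ideal R} (hM : M.IsMaximal)
    (hQ : Q.IsPrimary) (hQrad : Q.radical = M) (hIrad : I.radical = M) {w : R} (hwQ : w ∉ Q)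
    (hwI : w ∈ I) : Q ≤ I * M := by
  have hIMrad : (I * M).radical = M := by
    rw [Ideal.radical_mul, hIrad, hM.isPrime.radical, inf_idem]
  have hIM : (I * M).IsPrimary := Ideal.isPrimary_of_isMaximal_radical (by rwa [hIMrad])
  intro r hr
  obtain ⟨s, hsM, ⟨t, ht⟩ | ⟨t, ht⟩⟩ := hR.exists_notMem_dvd_mul_or_dvd_mul hM.ne_top w r
  · have htM : t ∈ M := by
      by_contra htM
      exact hwQ (hQ.mem_of_mul_mem_of_notMem_radical (ht ▸ Q.mul_mem_left s hr) (hQrad ▸ htM))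
    refine hIM.mem_of_mul_mem_of_notMem_radical (y := s) ?_ (by rwa [hIMrad])
    rw [mul_comm r s, ht]
    exact Ideal.mul_mem_mul hwI htM
  · refine absurd (hQ.mem_of_mul_mem_of_notMem_radical (y := s) ?_ (hQrad ▸ hsM)) hwQ
    rw [mul_comm w s, ht]
    exact Q.mul_mem_right t hr

end Domain

theorem nondivisorial_primary_eq_fg_mul_general (R : Type*) [CommRing R] [IsDomain R]
    (hR : IsPrufer R) (M : Ideal R) (hM : M.IsMaximal)
    (hrad : ∃ B : Ideal R, B.FG ∧ B.radical = M) :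
    ∀ Q : Ideal R, Q.IsPrimary → Q.radical = M → Q < M → ¬ IsDivisorial R Q →
      ∃ I : Ideal R, I.FG ∧ I.IsPrimary ∧ I.radical = M ∧ Q = I * M := by
  intro Q hQ hQrad hQM hnd
  obtain ⟨B, hBfg, hBrad⟩ := hrad
  obtain ⟨w, hwQ, hw⟩ := Ideal.exists_notMem_memDivisorialClosure_of_not_isDivisorial hnd
  obtain ⟨n, hn⟩ :=
    Ideal.exists_pow_le_of_le_radical_of_fg (hQrad ▸ hBrad ▸ Ideal.le_radical) hBfg
  set J := B ^ (n + 1) with hJ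
  have hJQ : J ≤ Q := (Ideal.pow_le_pow_right n.le_succ).trans hn
  have hJrad : J.radical = M := by rw [hJ, Ideal.radical_pow B n.succ_ne_zero, hBrad]
  have hwMQ : ∀ x ∈ M, w * x ∈ Q := fun x hx => hw.mul_mem hR hM hQ hQrad hBfg.pow hJQ hJrad hx
  have hwM : w ∈ M := by
    by_contra hwM
    exact hQM.not_ge fun y hy =>
      hQ.mem_of_mul_mem_of_notMem_radical (mul_comm w y ▸ hwMQ y hy) (hQrad ▸ hwM)
  set I := Ideal.span {w} ⊔ J
  have hIM : I ≤ M := sup_le ((Ideal.span_singleton_le_iff_mem _).mpr hwM) (hJQ.trans hQM.le)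
  have hIrad : I.radical = M :=
    le_antisymm (hM.isPrime.radical_le_iff.mpr hIM) (hJrad ▸ Ideal.radical_mono le_sup_right)
  refine ⟨I, (Submodule.fg_span_singleton w).sup hBfg.pow,
    Ideal.isPrimary_of_isMaximal_radical (hIrad ▸ hM), hIrad,
    le_antisymm (hR.le_mul_of_isPrimary hM hQ hQrad hIrad hwQ
      (Ideal.mem_sup_left (Ideal.mem_span_singleton_self w))) ?_⟩
  rw [Ideal.sup_mul]
  exact sup_le (Ideal.span_singleton_mul_le_iff.mpr hwMQ) (Ideal.mul_le_left.trans hJQ)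

/-- If `M` is a branched, idempotent, sharp maximal ideal of a Prüfer domain, then every
non-divisorial `M`-primary ideal properly contained in `M` has the form `I * M` for
some finitely generated `M`-primary ideal `I`. -/
theorem nondivisorial_primary_eq_fg_mul (R : Type*) [CommRing R] [IsDomain R]
    (hR : IsPrufer R) (M : Ideal R) (hM : M.IsMaximal)
    (hbr : ∃ Q : Ideal R, Q.IsPrimary ∧ Q.radical = M ∧ Q ≠ M)
    (hid : M * M = M)
    (hrad : ∃ B : Ideal R, B.FG ∧ B.radical = M) :
    ∀ Q : Ideal R, Q.IsPrimary → Q.radical = M → Q < M → ¬ IsDivisorial R Q →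
      ∃ I : Ideal R, I.FG ∧ I.IsPrimary ∧ I.radical = M ∧ Q = I * M :=
  nondivisorial_primary_eq_fg_mul_general R hR M hM hrad
end

section
/- Let R be a Prüfer domain and P a nonzero branched prime that is the radical of a finitely generated ideal. Then there exists a proper P-primary ideal of R that is divisorial. -/
/-!
Let `B` be finitely generated with `√B = P` and `Pᵛ = (R : (R : P))`; we take `Q = Pᵛ B`.
Since `B` is invertible and `Pᵛ` is divisorial, so is `Q`; and `Q = P` would force `B = P`,
hence `Pᵛ = P` and `P² = P` for the invertible proper ideal `P`, which is absurd.

A Prüfer ring is locally a valuation ring, so for a maximal `M ⊇ P` and `t ∉ P`, locally at `M`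
every element of `P` is `t` times an element of `P`. Consequently `PJ` is `P`-primary whenever
`P ≤ √J`. This settles primality when `P` is not maximal, because then `Pᵛ = P`: with
`t₀ ∈ M \ P` and `x ∈ Pᵛ \ P`, finite generation of `B` produces `s ∉ M` with
`s / (x t₀) ∈ P⁻¹`, so `s / t₀ = x · s / (x t₀) ∈ R` puts `s` in `M`. When `P` is maximal,
`Q` is primary because its radical is maximal.
-/

open scoped nonZeroDivisors

namespace FractionalIdeal

variable {R : Type*} [CommRing R] {K : Type*} [Field K] [Algebra R K]

theorem exists_mul_add_mul_eq_one_of_mul_eq_one {a b : R} {C : FractionalIdeal R⁰ K}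
    (h : (Ideal.span {a, b} : FractionalIdeal R⁰ K) * C = 1) :
    ∃ w₁ ∈ C, ∃ w₂ ∈ C, algebraMap R K a * w₁ + algebraMap R K b * w₂ = 1 := by
  have hone : (1 : K) ∈ ((Ideal.span {a, b} : FractionalIdeal R⁰ K) : Submodule R K) * C := by
    rw [← coe_mul, h]; exact one_mem_one _
  rw [coe_coeIdeal, IsLocalization.coeSubmodule_span, Set.image_pair, Set.insert_eq,
    Submodule.span_union, Submodule.sup_mul, Submodule.mem_sup] at hone
  obtain ⟨_, h₁, _, h₂, hsum⟩ := hone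
  obtain ⟨w₁, hw₁, rfl⟩ := Submodule.mem_span_singleton_mul.mp h₁
  obtain ⟨w₂, hw₂, rfl⟩ := Submodule.mem_span_singleton_mul.mp h₂
  exact ⟨w₁, hw₁, w₂, hw₂, hsum⟩

variable [IsDomain R] [IsFractionRing R K]

protected theorem inv_ne_zero {I : FractionalIdeal R⁰ K} (hI : I ≠ 0) : I⁻¹ ≠ 0 := by
  obtain ⟨a, ha, hint⟩ := I.isFractional
  have hmem : algebraMap R K a ∈ I⁻¹ := (mem_inv_iff hI).mpr fun y hy => by
    obtain ⟨r, hr⟩ := hint y hy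
    exact (mem_one_iff _).mpr ⟨r, by rw [hr, Algebra.smul_def]⟩
  intro h
  rw [h, mem_zero_iff] at hmem
  exact IsLocalization.to_map_ne_zero_of_mem_nonZeroDivisors K le_rfl ha hmem

theorem le_inv_inv (I : FractionalIdeal R⁰ K) : I ≤ I⁻¹⁻¹ := by
  rcases eq_or_ne I 0 with rfl | hI
  · exact zero_le _
  exact fun x hx => (mem_inv_iff (FractionalIdeal.inv_ne_zero hI)).mpr fun y hy =>
    mul_comm y x ▸ (mem_inv_iff hI).mp hy x hx

theorem inv_inv_inv (I : FractionalIdeal R⁰ K) : I⁻¹⁻¹⁻¹ = I⁻¹ := by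
  rcases eq_or_ne I 0 with rfl | hI
  · simp [inv_zero']
  have hI' := FractionalIdeal.inv_ne_zero hI
  exact le_antisymm (inv_anti_mono hI (FractionalIdeal.inv_ne_zero hI') (le_inv_inv I))
    (le_inv_inv I⁻¹)

theorem inv_inv_le_one {I : FractionalIdeal R⁰ K} (hI : I ≠ 0) (hI1 : I ≤ 1) :
    I⁻¹⁻¹ ≤ 1 := by
  have one_le : 1 ≤ I⁻¹ := by rw [inv_eq, le_div_iff_mul_le hI, one_mul]; exact hI1
  simpa [inv_eq] using
    inv_anti_mono (one_ne_zero' (FractionalIdeal R⁰ K)) (FractionalIdeal.inv_ne_zero hI) one_le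

theorem coe_units_inv (u : (FractionalIdeal R⁰ K)ˣ) :
    ((u⁻¹ : (FractionalIdeal R⁰ K)ˣ) : FractionalIdeal R⁰ K) =
      (u : FractionalIdeal R⁰ K)⁻¹ :=
  right_inverse_eq K _ _ u.mul_inv

theorem inv_mul_units (I : FractionalIdeal R⁰ K) (u : (FractionalIdeal R⁰ K)ˣ) :
    (I * u)⁻¹ = I⁻¹ * ↑u⁻¹ := by
  rcases eq_or_ne I 0 with rfl | hI
  · simp [inv_zero']
  have hIu : I * u ≠ 0 := (Units.mul_left_eq_zero u).not.mpr hI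
  refine eq_of_forall_le_iff fun X => ?_
  rw [Units.le_mul_inv_iff, inv_eq, inv_eq, le_div_iff_mul_le hIu, le_div_iff_mul_le hI,
    ← mul_assoc, mul_right_comm X]

theorem inv_inv_mul_units (I : FractionalIdeal R⁰ K) (u : (FractionalIdeal R⁰ K)ˣ) :
    (I * u)⁻¹⁻¹ = I⁻¹⁻¹ * u := by
  rw [inv_mul_units, inv_mul_units, inv_inv]

theorem div_mem_inv_coeIdeal {I : Ideal R} (hI : I ≠ ⊥) {s t : R} (ht : t ≠ 0)
    (h : ∀ p ∈ I, t ∣ s * p) :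
    algebraMap R K s / algebraMap R K t ∈ (I : FractionalIdeal R⁰ K)⁻¹ := by
  refine (mem_inv_iff (coeIdeal_ne_zero.mpr hI)).mpr fun y hy => ?_
  obtain ⟨p, hp, rfl⟩ := (mem_coeIdeal _).mp hy
  obtain ⟨c, hc⟩ := h p hp
  have ht' : algebraMap R K t ≠ 0 := (map_ne_zero_iff _ (IsFractionRing.injective R K)).mpr ht
  refine (mem_one_iff _).mpr ⟨c, ?_⟩
  rw [div_mul_eq_mul_div, ← map_mul, hc, map_mul, mul_div_cancel_left₀ _ ht']

end FractionalIdeal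

namespace Ideal
variable {R : Type*} [CommRing R]

theorem mem_of_forall_isMaximal_exists_notMem {J : Ideal R} {x : R}
    (h : ∀ M : Ideal R, M.IsMaximal → ∃ s ∉ M, s * x ∈ J) : x ∈ J := by
  by_contra hx
  obtain ⟨M, hM, hle⟩ := exists_le_maximal (J.colon {x})
    (by rwa [Ne, Submodule.colon_eq_top_iff_subset, Set.singleton_subset_iff])
  obtain ⟨s, hs, hsx⟩ := h M hM
  exact hs (hle (Submodule.mem_colon_singleton.mpr hsx))

theorem exists_notMem_forall_mul_mem_of_fg {J B M : Ideal R} (hM : M.IsPrime) (hB : B.FG)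
    (h : ∀ b ∈ B, ∃ s ∉ M, s * b ∈ J) : ∃ s ∉ M, ∀ b ∈ B, s * b ∈ J := by
  classical
  suffices ¬ J.colon (B : Set R) ≤ M by
    obtain ⟨s, hs, hsM⟩ := SetLike.not_le_iff_exists.mp this
    exact ⟨s, hsM, fun b hb => Submodule.mem_colon.mp hs b hb⟩
  obtain ⟨T, rfl⟩ := hB
  rw [Ideal.colon_span]
  replace h : ∀ b ∈ T, ¬ J.colon {b} ≤ M := fun b hb hle => by
    obtain ⟨s, hs, hsb⟩ := h b (subset_span hb)
    exact hs (hle (Submodule.mem_colon_singleton.mpr hsb))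
  induction T using Finset.induction_on with
  | empty => simpa using hM.ne_top
  | insert a T _ ih =>
    rw [Finset.coe_insert, Set.insert_eq, Submodule.colon_union, hM.inf_le, not_or]
    exact ⟨h a (Finset.mem_insert_self a T), ih fun b hb => h b (Finset.mem_insert_of_mem hb)⟩

theorem exists_coeIdeal_eq_inv_inv [IsDomain R] {I : Ideal R} (hI : I ≠ ⊥) :
    ∃ J : Ideal R,
      (J : FractionalIdeal R⁰ (FractionRing R)) = (I : FractionalIdeal R⁰ _)⁻¹⁻¹ :=
  FractionalIdeal.le_one_iff_exists_coeIdeal.mp <| FractionalIdeal.inv_inv_le_one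
    (FractionalIdeal.coeIdeal_ne_zero.mpr hI) FractionalIdeal.coeIdeal_le_one

theorem mul_lt_of_coeIdeal_eq_inv_inv [IsDomain R] {P B J : Ideal R} (hP : P ≠ ⊤)
    (hBP : B ≤ P) {u : (FractionalIdeal R⁰ (FractionRing R))ˣ}
    (hu : (u : FractionalIdeal R⁰ (FractionRing R)) = B)
    (hJ : (J : FractionalIdeal R⁰ (FractionRing R)) = (P : FractionalIdeal R⁰ _)⁻¹⁻¹) :
    J * B < P := by
  refine lt_of_le_of_ne (mul_le_right.trans hBP) fun hJB => hP ?_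
  obtain rfl : B = P := le_antisymm hBP (hJB ▸ mul_le_right)
  have hu2 : (u : FractionalIdeal R⁰ (FractionRing R)) * u = 1 * u := by
    have := congrArg (fun I : Ideal R => (I : FractionalIdeal R⁰ (FractionRing R))) hJB
    simp only [FractionalIdeal.coeIdeal_mul, hJ, ← hu, ← FractionalIdeal.coe_units_inv,
      inv_inv] at this
    rw [this, one_mul]
  rw [← one_eq_top, ← FractionalIdeal.coeIdeal_eq_one (K := FractionRing R), ← hu]
  exact (Units.mul_left_inj u).mp hu2

end Ideal

namespace IsPrufer
variable {R : Type*} [CommRing R] [IsDomain R]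

theorem exists_notMem_dvd_mul_or_dvd_mul_s12 (hR : IsPrufer R) {M : Ideal R} (hM : M ≠ ⊤)
    (a b : R) : ∃ s ∉ M, b ∣ s * a ∨ a ∣ s * b := by
  have one_notMem : (1 : R) ∉ M := (M.ne_top_iff_one).mp hM
  rcases eq_or_ne a 0 with rfl | ha
  · exact ⟨1, one_notMem, Or.inl (by simp)⟩
  set I : FractionalIdeal R⁰ (FractionRing R) := ↑(Ideal.span {a, b} : Ideal R)
  have hI : I * I⁻¹ = 1 := (FractionalIdeal.mul_inv_cancel_iff_isUnit _).mpr <|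
    hR _ (fun h => ha (Ideal.span_eq_bot.mp h a (by simp)))
      (Submodule.fg_span ((Set.finite_singleton b).insert a))
  have integral : ∀ x ∈ ({a, b} : Set R), ∀ w ∈ I⁻¹,
      ∃ r : R, algebraMap R _ r = algebraMap R _ x * w := fun x hx w hw =>
    (FractionalIdeal.mem_one_iff _).mp <| hI ▸ FractionalIdeal.mul_mem_mul
      ((FractionalIdeal.mem_coeIdeal _).mpr ⟨x, Ideal.subset_span hx, rfl⟩) hw
  obtain ⟨w₁, hw₁, w₂, hw₂, hsum⟩ :=
    FractionalIdeal.exists_mul_add_mul_eq_one_of_mul_eq_one hI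
  obtain ⟨r₁, hr₁⟩ := integral a (by simp) w₁ hw₁
  obtain ⟨r₂, hr₂⟩ := integral b (by simp) w₂ hw₂
  obtain ⟨c₁, hc₁⟩ := integral b (by simp) w₁ hw₁
  obtain ⟨c₂, hc₂⟩ := integral a (by simp) w₂ hw₂
  have hinj := IsFractionRing.injective R (FractionRing R)
  have hr : r₁ + r₂ = 1 := hinj (by simp [hr₁, hr₂, hsum])
  by_cases hr₁M : r₁ ∈ M
  · have hr₂M : r₂ ∉ M := fun hr₂M => one_notMem (hr ▸ M.add_mem hr₁M hr₂M)
    refine ⟨r₂, hr₂M, Or.inl ⟨c₂, hinj ?_⟩⟩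
    simp only [map_mul, hr₂, hc₂]; ring
  · refine ⟨r₁, hr₁M, Or.inr ⟨c₁, hinj ?_⟩⟩
    simp only [map_mul, hr₁, hc₁]; ring

theorem exists_notMem_mul_eq_mul_of_mem (hR : IsPrufer R) {P M : Ideal R} (hP : P.IsPrime)
    (hPM : P ≤ M) (hM : M ≠ ⊤) {t q : R} (ht : t ∉ P) (hq : q ∈ P) :
    ∃ s ∉ M, ∃ c ∈ P, s * q = t * c := by
  obtain ⟨s, hs, ⟨c, hc⟩ | ⟨c, hc⟩⟩ := hR.exists_notMem_dvd_mul_or_dvd_mul_s12 hM q t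
  · exact ⟨s, hs, c, (hP.mem_or_mem (hc ▸ P.mul_mem_left s hq)).resolve_left ht, hc⟩
  · have hst : s * t ∈ P := hc ▸ P.mul_mem_right c hq
    exact absurd ((hP.mem_or_mem hst).resolve_right ht) fun h => hs (hPM h)

theorem exists_notMem_mul_eq_mul_of_mem_mul (hR : IsPrufer R) {P M : Ideal R} (hP : P.IsPrime)
    (hPM : P ≤ M) (hM : M.IsPrime) {t : R} (ht : t ∉ P) (J : Ideal R) {z : R}
    (hz : z ∈ P * J) : ∃ s ∉ M, ∃ c ∈ P * J, s * z = t * c := by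
  induction hz using Submodule.mul_induction_on' with
  | mem_mul_mem p hp j hj =>
    obtain ⟨s, hs, c, hc, h⟩ := hR.exists_notMem_mul_eq_mul_of_mem hP hPM hM.ne_top ht hp
    exact ⟨s, hs, c * j, Ideal.mul_mem_mul hc hj, by rw [← mul_assoc, h, mul_assoc]⟩
  | add z₁ _ z₂ _ h₁ h₂ =>
    obtain ⟨s₁, hs₁, c₁, hc₁, e₁⟩ := h₁
    obtain ⟨s₂, hs₂, c₂, hc₂, e₂⟩ := h₂
    refine ⟨s₁ * s₂, hM.mul_notMem hs₁ hs₂, s₂ * c₁ + s₁ * c₂,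
      add_mem (Ideal.mul_mem_left _ _ hc₁) (Ideal.mul_mem_left _ _ hc₂), ?_⟩
    linear_combination s₂ * e₁ + s₁ * e₂

theorem isPrimary_mul (hR : IsPrufer R) {P : Ideal R} (hP : P.IsPrime) {J : Ideal R}
    (hJ : P ≤ J.radical) : (P * J).IsPrimary := by
  have hrad : (P * J).radical = P := by
    rw [Ideal.radical_mul, hP.radical, inf_eq_left.mpr hJ]
  refine Ideal.isPrimary_iff.mpr ⟨ne_top_of_le_ne_top hP.ne_top Ideal.mul_le_left,
    fun {x y} hxy => or_iff_not_imp_right.mpr fun hy => ?_⟩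
  rw [hrad] at hy
  refine Ideal.mem_of_forall_isMaximal_exists_notMem fun M hM => ?_
  by_cases hPM : P ≤ M
  · obtain ⟨s, hs, c, hc, h⟩ :=
      hR.exists_notMem_mul_eq_mul_of_mem_mul hP hPM hM.isPrime hy J hxy
    have hy0 : y ≠ 0 := fun h => hy (h ▸ P.zero_mem)
    have hsx : s * x = c := mul_left_cancel₀ hy0 (by linear_combination h)
    exact ⟨s, hs, hsx ▸ hc⟩
  · obtain ⟨σ, hσ, hσM⟩ := SetLike.not_le_iff_exists.mp fun h =>
      hPM (hrad ▸ hM.isPrime.radical_le_iff.mpr h)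
    exact ⟨σ, hσM, Ideal.mul_mem_right x _ hσ⟩

theorem exists_notMem_forall_dvd_mul (hR : IsPrufer R) {P M B : Ideal R} (hP : P.IsPrime)
    (hPM : P ≤ M) (hM : M.IsPrime) (hB : B.FG) (hBP : B.radical = P) {t : R} (ht : t ∉ P) :
    ∃ s ∉ M, ∀ p ∈ P, t ∣ s * p := by
  simp only [← Ideal.mem_span_singleton]
  obtain ⟨s, hs, hsB⟩ := Ideal.exists_notMem_forall_mul_mem_of_fg hM hB fun b hb => by
    obtain ⟨s, hs, c, -, h⟩ := hR.exists_notMem_mul_eq_mul_of_mem hP hPM hM.ne_top ht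
      (hBP ▸ Ideal.le_radical hb)
    exact ⟨s, hs, Ideal.mem_span_singleton'.mpr ⟨c, by rw [h, mul_comm]⟩⟩
  refine ⟨s, hs, fun p hp => Ideal.mem_of_forall_isMaximal_exists_notMem fun M' hM' => ?_⟩
  by_cases hPM' : P ≤ M'
  · obtain ⟨s', hs', c, -, h⟩ := hR.exists_notMem_mul_eq_mul_of_mem hP hPM' hM'.ne_top ht hp
    exact ⟨s', hs', Ideal.mem_span_singleton'.mpr ⟨s * c, by rw [mul_left_comm, h]; ring⟩⟩
  · obtain ⟨b, hb, hbM'⟩ := SetLike.not_le_iff_exists.mp fun hBM' =>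
      hPM' (hBP ▸ hM'.isPrime.radical_le_iff.mpr hBM')
    exact ⟨b, hbM', by simpa only [mul_left_comm b, mul_assoc] using
      Ideal.mul_mem_right p _ (hsB b hb)⟩

theorem coeIdeal_inv_inv_eq_of_not_isMaximal (hR : IsPrufer R) {P B : Ideal R}
    (hP : P.IsPrime) (h0 : P ≠ ⊥) (hPmax : ¬ P.IsMaximal) (hB : B.FG) (hBP : B.radical = P) :
    (P : FractionalIdeal R⁰ (FractionRing R))⁻¹⁻¹ = P := by
  have hinj := IsFractionRing.injective R (FractionRing R)
  have hP0 := FractionalIdeal.coeIdeal_ne_zero (K := FractionRing R).mpr h0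
  refine le_antisymm (fun u hu => ?_) (FractionalIdeal.le_inv_inv _)
  obtain ⟨x, rfl⟩ := (FractionalIdeal.mem_one_iff _).mp
    (FractionalIdeal.inv_inv_le_one hP0 FractionalIdeal.coeIdeal_le_one hu)
  refine (FractionalIdeal.mem_coeIdeal _).mpr ⟨x, of_not_not fun hx => ?_, rfl⟩
  obtain ⟨M, hM, hPM⟩ := P.exists_le_maximal hP.ne_top
  obtain ⟨t, htM, htP⟩ := SetLike.exists_of_lt (lt_of_le_of_ne hPM fun h => hPmax (h ▸ hM))
  have hxt : x * t ∉ P := hP.mul_notMem hx htP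
  obtain ⟨s, hsM, hs⟩ := hR.exists_notMem_forall_dvd_mul hP hPM hM.isPrime hB hBP hxt
  have hx0 : x * t ≠ 0 := fun h => hxt (h ▸ P.zero_mem)
  obtain ⟨r, hr⟩ := (FractionalIdeal.mem_one_iff _).mp <| (FractionalIdeal.mem_inv_iff
    (FractionalIdeal.inv_ne_zero hP0)).mp hu _ (FractionalIdeal.div_mem_inv_coeIdeal h0 hx0 hs)
  have hsr : s = r * t := hinj <| by
    rw [map_mul, hr, map_mul]
    field_simp [(map_ne_zero_iff _ hinj).mpr (left_ne_zero_of_mul hx0),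
      (map_ne_zero_iff _ hinj).mpr (right_ne_zero_of_mul hx0)]
  exact hsM (hsr ▸ M.mul_mem_left r htM)

end IsPrufer

/-- If a nonzero prime of a Prüfer domain is the radical of a finitely generated
ideal, then it has a divisorial proper primary ideal. -/
theorem exists_divisorial_proper_primary (R : Type*) [CommRing R] [IsDomain R]
    (hR : IsPrufer R) (P : Ideal R) (hP : P.IsPrime) (h0 : P ≠ ⊥)
    (hrad : ∃ B : Ideal R, B.FG ∧ B.radical = P) :
    ∃ Q : Ideal R, Q.IsPrimary ∧ Q.radical = P ∧ Q < P ∧ IsDivisorial R Q := by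
  obtain ⟨B, hBfg, hBrad⟩ := hrad
  have hBP : B ≤ P := hBrad ▸ Ideal.le_radical
  have hB0 : B ≠ ⊥ := by
    rintro rfl
    exact h0 (by rw [← hBrad, Ideal.radical_bot_of_isReduced])
  obtain ⟨u, hu⟩ := hR B hB0 hBfg
  obtain ⟨Pv, hPv⟩ := Ideal.exists_coeIdeal_eq_inv_inv h0
  have hPPv : P ≤ Pv := FractionalIdeal.coeIdeal_le_coeIdeal (FractionRing R) |>.mp
    (hPv ▸ FractionalIdeal.le_inv_inv _)
  have hrad : (Pv * B).radical = P := by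
    refine le_antisymm (hBrad ▸ Ideal.radical_mono Ideal.mul_le_right) ?_
    simpa [Ideal.radical_mul, hP.radical, hBrad] using
      Ideal.radical_mono (Ideal.mul_mono_left hPPv : P * B ≤ Pv * B)
  refine ⟨Pv * B, ?_, hrad, Ideal.mul_lt_of_coeIdeal_eq_inv_inv hP.ne_top hBP hu hPv, ?_⟩
  · by_cases hmax : P.IsMaximal
    · exact Ideal.isPrimary_of_isMaximal_radical (hrad ▸ hmax)
    · obtain rfl : Pv = P := FractionalIdeal.coeIdeal_injective (K := FractionRing R) <|
        hPv.trans (hR.coeIdeal_inv_inv_eq_of_not_isMaximal hP h0 hmax hBfg hBrad)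
      exact hR.isPrimary_mul hP hBrad.ge
  · show ((Pv * B : Ideal R) : FractionalIdeal R⁰ (FractionRing R))⁻¹⁻¹ = _
    rw [FractionalIdeal.coeIdeal_mul, hPv, ← hu, FractionalIdeal.inv_inv_mul_units,
      FractionalIdeal.inv_inv_inv]
end

section
/- Let R be a Prüfer domain and P a nonzero nonmaximal branched prime that is sharp (the radical of a finitely generated ideal). If Q is a proper P-primary ideal and B is an ideal with Q ⊊ B ⊆ P, then there exists a finitely generated ideal I of R with Q ⊊ I ⊊ B. -/
/-!
Write `P = √J` with `J` finitely generated, so `Jⁿ ⊆ Q` for some `n`, and pick `x ∉ P` lying in a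
proper ideal `M ⊋ P` (possible since `P` is not maximal) and `b ∈ B \ Q`. Then `I = Jⁿ + (x b)` is
finitely generated and contained in `B`. It contains `Q`: in a Prüfer domain any two elements
`q, y` satisfy `((y) : q) + ((q) : y) = R`; for `q ∈ Q` and `y = x b ∉ Q` the second colon lies in
`√Q = √(Jⁿ)`, so `√(I : q) = R`. Finally `b ∉ I`, since `b = j + r x b` would give
`(1 - r x) b ∈ Q` with `1 - r x ∉ P`.
-/

open FractionalIdeal Ideal

section

variable {R : Type*} [CommRing R]

theorem Ideal.IsPrimary.colon_singleton_le_radical {Q : Ideal R} (hQ : Q.IsPrimary) {y : R}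
    (hy : y ∉ Q) : Q.colon {y} ≤ Q.radical := fun s hs =>
  ((isPrimary_iff.mp hQ).2 (mul_comm s y ▸ Submodule.mem_colon_singleton.mp hs)).resolve_left hy

theorem Ideal.IsPrimary.notMem_sup_span_singleton_mul {Q M : Ideal R} (hQ : Q.IsPrimary)
    (hM : M ≠ ⊤) (hQM : Q.radical ≤ M) {b x : R} (hb : b ∉ Q) (hx : x ∈ M) :
    b ∉ Q ⊔ span {x * b} := by
  intro hmem
  obtain ⟨r, q, hq, hrq⟩ := mem_span_singleton_sup.mp (sup_comm Q _ ▸ hmem)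
  have hrx : 1 - r * x ∈ Q.radical := by
    refine ((isPrimary_iff.mp hQ).2 (?_ : b * (1 - r * x) ∈ Q)).resolve_left hb
    convert hq using 1
    linear_combination -hrq
  exact hM ((eq_top_iff_one M).mpr (by simpa using add_mem (hQM hrx) (M.mul_mem_left r hx)))

end

section

variable {R : Type*} [CommRing R] [IsDomain R]

theorem IsPrufer.colon_sup_colon_eq_top (hR : IsPrufer R) (a b : R) :
    (span {b}).colon {a} ⊔ (span {a}).colon {b} = ⊤ := by
  by_cases ha : a = 0
  · rw [ha, Submodule.colon_singleton_zero, top_sup_eq]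
  let φ := algebraMap R (FractionRing R)
  have hK : IsInvertibleIdeal R (span {a, b}) :=
    hR _ (fun h => ha (by simpa using (span_eq_bot.mp h) a (by simp)))
      (Submodule.fg_span (Set.toFinite _))
  obtain ⟨K', hKK'⟩ := hK.exists_right_inv
  have hK_eq : (span {a, b} : FractionalIdeal (nonZeroDivisors R) (FractionRing R)) =
      spanSingleton _ (φ a) + spanSingleton _ (φ b) := by
    rw [span_insert, coeIdeal_sup, coeIdeal_span_singleton, coeIdeal_span_singleton]
  have integral : ∀ z ∈ span {a, b}, ∀ c ∈ K', ∃ r : R, φ r = φ z * c := fun z hz c hc =>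
    (mem_one_iff _).mp (hKK' ▸ mul_mem_mul ((mem_coeIdeal _).mpr ⟨z, hz, rfl⟩) hc)
  -- `1 = a c₁ + b c₂` with `c₁, c₂ ∈ (a, b)⁻¹`; then `b c₂ ∈ ((b) : a)` and `a c₁ ∈ ((a) : b)`.
  have h1 : (1 : FractionRing R) ∈ spanSingleton _ (φ a) * K' + spanSingleton _ (φ b) * K' := by
    rw [← add_mul, ← hK_eq, hKK']
    exact one_mem_one _
  obtain ⟨_, hac, _, hbc, hsum⟩ := (mem_add _ _ _).mp h1
  obtain ⟨c₁, hc₁, rfl⟩ := mem_singleton_mul.mp hac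
  obtain ⟨c₂, hc₂, rfl⟩ := mem_singleton_mul.mp hbc
  obtain ⟨s₁, hs₁⟩ := integral a (subset_span (by simp)) c₁ hc₁
  obtain ⟨t₁, ht₁⟩ := integral b (subset_span (by simp)) c₁ hc₁
  obtain ⟨s₂, hs₂⟩ := integral b (subset_span (by simp)) c₂ hc₂
  obtain ⟨t₂, ht₂⟩ := integral a (subset_span (by simp)) c₂ hc₂
  have hφ : Function.Injective φ := IsFractionRing.injective R (FractionRing R)
  rw [eq_top_iff_one]
  have hs : s₂ + s₁ = 1 := hφ (by rw [map_add, map_one, hs₁, hs₂, ← hsum, add_comm])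
  refine hs ▸ add_mem (mem_sup_left ?_) (mem_sup_right ?_)
  · refine Submodule.mem_colon_singleton.mpr (mem_span_singleton'.mpr ⟨t₂, hφ ?_⟩)
    simp only [smul_eq_mul, map_mul, hs₂, ht₂]
    ring
  · refine Submodule.mem_colon_singleton.mpr (mem_span_singleton'.mpr ⟨t₁, hφ ?_⟩)
    simp only [smul_eq_mul, map_mul, hs₁, ht₁]
    ring

theorem IsPrufer.le_sup_span_singleton (hR : IsPrufer R) {Q J : Ideal R} (hQ : Q.IsPrimary)
    (hQJ : Q.radical ≤ J.radical) {y : R} (hy : y ∉ Q) : Q ≤ J ⊔ span {y} := by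
  intro q hq
  suffices ((J ⊔ span {y}).colon {q}).radical = ⊤ by
    simpa using radical_eq_top.mp this
  rw [eq_top_iff, ← hR.colon_sup_colon_eq_top q y]
  refine sup_le ?_ ?_
  · exact (Submodule.colon_mono le_sup_right subset_rfl).trans le_radical
  · calc (span {q}).colon {y} ≤ Q.colon {y} :=
          Submodule.colon_mono ((span_singleton_le_iff_mem _).mpr hq) subset_rfl
      _ ≤ Q.radical := hQ.colon_singleton_le_radical hy
      _ ≤ J.radical := hQJ
      _ ≤ ((J ⊔ span {y}).colon {q}).radical := radical_mono (le_sup_left.trans le_colon)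

end

theorem exists_fg_strictly_between_general (R : Type*) [CommRing R] [IsDomain R]
    (hR : IsPrufer R) (P : Ideal R) (hnm : ¬ P.IsMaximal)
    (hrad : ∃ J : Ideal R, J.FG ∧ J.radical = P)
    (Q : Ideal R) (hQ : Q.IsPrimary) (hQrad : Q.radical = P)
    (B : Ideal R) (hQB : Q < B) :
    ∃ I : Ideal R, I.FG ∧ Q < I ∧ I < B := by
  obtain ⟨J, hJfg, rfl⟩ := hrad
  obtain ⟨n, hJnQ⟩ := exists_pow_le_of_le_radical_of_fg (le_radical.trans hQrad.ge) hJfg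
  obtain ⟨M, hJM, hMtop⟩ : ∃ M, J.radical < M ∧ M ≠ ⊤ := by
    have hPtop : J.radical ≠ ⊤ := hQrad ▸ (isPrime_radical hQ).ne_top
    simpa [isMaximal_def, IsCoatom, hPtop] using hnm
  obtain ⟨x, hxM, hxP⟩ := SetLike.exists_of_lt hJM
  obtain ⟨b, hbB, hbQ⟩ := SetLike.exists_of_lt hQB
  have hxb : x * b ∉ Q := fun h =>
    ((isPrimary_iff.mp hQ).2 (mul_comm x b ▸ h)).elim hbQ (hQrad ▸ hxP)
  have hQI : Q ≤ J ^ n ⊔ span {x * b} :=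
    hR.le_sup_span_singleton hQ (hQrad ▸ radical_le_radical_iff.mpr
      fun j hj => ⟨n, pow_mem_pow hj n⟩) hxb
  have hbI : b ∉ J ^ n ⊔ span {x * b} := fun hb =>
    hQ.notMem_sup_span_singleton_mul hMtop (hQrad ▸ hJM.le) hbQ hxM (sup_le_sup_right hJnQ _ hb)
  refine ⟨J ^ n ⊔ span {x * b}, Submodule.FG.sup hJfg.pow (Submodule.fg_span_singleton _),
    lt_of_le_of_ne hQI ?_, lt_of_le_of_ne ?_ ?_⟩
  · rintro rfl
    exact hxb (mem_sup_right (mem_span_singleton_self _))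
  · exact sup_le (hJnQ.trans hQB.le) ((span_singleton_le_iff_mem _).mpr (B.mul_mem_left x hbB))
  · rintro rfl
    exact hbI hbB

/-- Lemma: for a sharp branched nonzero nonmaximal prime `P` of a Prüfer domain, between a
proper `P`-primary ideal `Q` and any larger ideal `B ⊆ P` there is a finitely
generated ideal, strictly on both sides. -/
theorem exists_fg_strictly_between (R : Type*) [CommRing R] [IsDomain R]
    (hR : IsPrufer R) (P : Ideal R) (hP : P.IsPrime) (h0 : P ≠ ⊥)
    (hnm : ¬ P.IsMaximal) (hsharp : IsSharp R P)
    (hrad : ∃ J : Ideal R, J.FG ∧ J.radical = P)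
    (Q : Ideal R) (hQ : Q.IsPrimary) (hQrad : Q.radical = P) (hQP : Q ≠ P)
    (B : Ideal R) (hQB : Q < B) (hBP : B ≤ P) :
    ∃ I : Ideal R, I.FG ∧ Q < I ∧ I < B :=
  exists_fg_strictly_between_general R hR P hnm hrad Q hQ hQrad B hQB
end

section
/- Let R be a Prüfer domain and P a nonzero nonmaximal prime that is branched and sharp. Then every proper P-primary ideal of R is divisorial. -/
/-!
Let `Q` be `P`-primary, `I ⊆ P` the finitely generated ideal witnessing sharpness, with
`I ^ k ⊆ Q`, and `m ∈ M \ P` for a maximal ideal `M ⊇ P`. For `r ∉ Q` the finitely generated,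
hence invertible, ideal `J = (r m) + I ^ k` avoids `r`: from `r = c r m + j` we get
`r (1 - c m) ∈ Q`, yet `1 - c m ∉ M ⊇ P`. It contains `Q`, which is checked at each maximal `N`:
if `I ⊄ N` then `I ^ k` already does it; otherwise `P ⊆ N` and, `R_N` being a valuation
domain, `q ∈ Q` and `r m` are comparable there, where `q ∣ r m` would force `r m ∈ Q`.
So `Q` is an intersection of invertible ideals, hence divisorial.
-/

open FractionalIdeal nonZeroDivisors

theorem Ideal.mem_of_forall_isMaximal_exists_mul_mem {R : Type*} [CommRing R] {J : Ideal R}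
    {q : R} (h : ∀ N : Ideal R, N.IsMaximal → ∃ s ∉ N, s * q ∈ J) : q ∈ J := by
  by_contra hq
  have hcolon : J.colon (Ideal.span {q}) ≠ ⊤ := fun htop =>
    hq (one_mul q ▸ Ideal.mem_colon_span_singleton.mp (htop ▸ Submodule.mem_top (x := 1)))
  obtain ⟨N, hN, hle⟩ := Ideal.exists_le_maximal _ hcolon
  obtain ⟨s, hsN, hsq⟩ := h N hN
  exact hsN (hle (Ideal.mem_colon_span_singleton.mpr hsq))

section FractionalIdeal

variable {R K : Type*} [CommRing R] [IsDomain R] [Field K] [Algebra R K] [IsFractionRing R K]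

theorem FractionalIdeal.mul_one_div_of_isUnit {J : FractionalIdeal R⁰ K} (hJ : IsUnit J) :
    J * (1 / J) = 1 := by
  obtain ⟨u, rfl⟩ := hJ
  exact mul_div_self_cancel_iff.mpr ⟨_, u.mul_inv⟩

theorem FractionalIdeal.one_div_one_div_le_of_le_of_isUnit {I J : FractionalIdeal R⁰ K}
    (hI : I ≠ 0) (hIJ : I ≤ J) (hJ : IsUnit J) : 1 / (1 / I) ≤ J := by
  have hJJ := mul_one_div_of_isUnit hJ
  have hJ' : 1 / J ≠ 0 := fun h => by simp [h] at hJJ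
  have hdiv : 1 / J ≤ 1 / I := (le_div_iff_mul_le hI).mpr <|
    calc 1 / J * I ≤ 1 / J * J := mul_le_mul_right hIJ _
      _ = 1 := by rw [mul_comm, hJJ]
  calc 1 / (1 / I) ≤ 1 / (1 / J) := (le_div_iff_mul_le hJ').mpr <|
        calc 1 / (1 / I) * (1 / J) ≤ 1 / (1 / I) * (1 / I) := mul_le_mul_right hdiv _
          _ ≤ 1 := by rw [mul_comm]; exact mul_one_div_le_one
    _ = J := (eq_one_div_of_mul_eq_one_right _ _ (by rw [mul_comm, hJJ])).symm

end FractionalIdeal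

section Domain

variable {R : Type*} [CommRing R] [IsDomain R]

theorem isDivisorial_of_forall_notMem_exists_isInvertibleIdeal {Q : Ideal R} (hQ : Q ≠ ⊥)
    (h : ∀ r ∉ Q, ∃ J : Ideal R, IsInvertibleIdeal R J ∧ Q ≤ J ∧ r ∉ J) : IsDivisorial R Q := by
  have hQ0 : (Q : FractionalIdeal R⁰ (FractionRing R)) ≠ 0 := coeIdeal_ne_zero.mpr hQ
  have hone : 1 ≤ 1 / (Q : FractionalIdeal R⁰ (FractionRing R)) :=
    (le_div_iff_mul_le hQ0).mpr (by rw [one_mul]; exact coeIdeal_le_one)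
  have hQ' : 1 / (Q : FractionalIdeal R⁰ (FractionRing R)) ≠ 0 :=
    ne_bot_of_le_ne_bot one_ne_zero hone
  refine le_antisymm (fun z hz => ?_) ((le_div_iff_mul_le hQ').mpr mul_one_div_le_one)
  have hz1 : z ∈ (1 : FractionalIdeal R⁰ (FractionRing R)) :=
    one_div_one_div_le_of_le_of_isUnit hQ0 coeIdeal_le_one isUnit_one hz
  obtain ⟨r, rfl⟩ := (mem_one_iff _).mp hz1
  refine mem_coeIdeal_of_mem _ (not_not.mp fun hr => ?_)
  obtain ⟨J, hJ, hQJ, hrJ⟩ := h r hr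
  obtain ⟨r', hr'J, hr'⟩ := (mem_coeIdeal _).mp <|
    one_div_one_div_le_of_le_of_isUnit hQ0 ((coeIdeal_le_coeIdeal _).mpr hQJ) hJ hz
  exact hrJ (IsFractionRing.injective R (FractionRing R) hr' ▸ hr'J)

/-- Locally at every maximal ideal, a Prüfer domain is a valuation domain. -/
theorem IsPrufer.exists_mul_eq_mul (hR : IsPrufer R) (x y : R) {N : Ideal R} (hN : N.IsMaximal) :
    ∃ s t : R, s ∉ N ∧ (s * x = t * y ∨ s * y = t * x) := by
  have h1N : (1 : R) ∉ N := N.ne_top_iff_one.mp hN.ne_top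
  rcases eq_or_ne x 0 with rfl | hx
  · exact ⟨1, 0, h1N, Or.inl (by simp)⟩
  set K := FractionRing R
  set W : FractionalIdeal R⁰ K := ↑(Ideal.span {x} ⊔ Ideal.span {y}) with hW
  have hxW : algebraMap R K x ∈ W :=
    mem_coeIdeal_of_mem _ (Ideal.mem_sup_left (Ideal.mem_span_singleton_self x))
  have hyW : algebraMap R K y ∈ W :=
    mem_coeIdeal_of_mem _ (Ideal.mem_sup_right (Ideal.mem_span_singleton_self y))
  obtain ⟨V, hWV⟩ := (hR _
    (fun h => hx (Ideal.span_singleton_eq_bot.mp (sup_eq_bot_iff.mp h).1))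
    ((Submodule.fg_span_singleton x).sup (Submodule.fg_span_singleton y))).exists_right_inv
  have hint : ∀ w ∈ W, ∀ v ∈ V, ∃ c : R, algebraMap R K c = w * v := fun w hw v hv =>
    (mem_one_iff _).mp (hWV ▸ mul_mem_mul hw hv)
  obtain ⟨A, hA, B, hB, hAB⟩ : ∃ A ∈ V, ∃ B ∈ V,
      algebraMap R K x * A + algebraMap R K y * B = 1 := by
    have h1 : (1 : K) ∈ W * V := hWV ▸ one_mem_one _
    rw [hW, coeIdeal_sup, add_mul, mem_add, coeIdeal_span_singleton,
      coeIdeal_span_singleton] at h1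
    obtain ⟨u, hu, v, hv, huv⟩ := h1
    obtain ⟨A, hA, rfl⟩ := mem_singleton_mul.mp hu
    obtain ⟨B, hB, rfl⟩ := mem_singleton_mul.mp hv
    exact ⟨A, hA, B, hB, huv⟩
  obtain ⟨a, ha⟩ := hint _ hxW A hA
  obtain ⟨b, hb⟩ := hint _ hxW B hB
  obtain ⟨c, hc⟩ := hint _ hyW A hA
  obtain ⟨d, hd⟩ := hint _ hyW B hB
  have hinj := IsFractionRing.injective R K
  have hsum : a + d = 1 := hinj (by rw [map_add, map_one, ha, hd, hAB])
  by_cases haN : a ∈ N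
  · refine ⟨d, b, fun hdN => h1N (hsum ▸ N.add_mem haN hdN), Or.inl (hinj ?_)⟩
    simp only [map_mul, hd, hb]
    ring
  · refine ⟨a, c, haN, Or.inr (hinj ?_)⟩
    simp only [map_mul, ha, hc]
    ring

end Domain

namespace Ideal.IsPrimary

variable {R : Type*} [CommRing R] {Q : Ideal R}

theorem notMem_span_mul_sup (hQ : Q.IsPrimary) {Q' : Ideal R} (hQ' : Q' ≤ Q) {M : Ideal R}
    (hM : M.IsMaximal) (hQM : Q.radical ≤ M) {r m : R} (hm : m ∈ M) (hr : r ∉ Q) :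
    r ∉ Ideal.span {r * m} ⊔ Q' := by
  intro hmem
  obtain ⟨c, j, hj, hcj⟩ := Ideal.mem_span_singleton_sup.mp hmem
  have hrQ : r * (1 - c * m) ∈ Q := by
    convert hQ' hj using 1
    linear_combination -hcj
  rcases (Ideal.isPrimary_iff.mp hQ).2 hrQ with h | h
  · exact hr h
  · exact hM.ne_top ((Ideal.eq_top_iff_one _).mpr
      (by simpa using M.add_mem (hQM h) (M.mul_mem_left c hm)))

theorem le_span_mul_sup [IsDomain R] (hQ : Q.IsPrimary) (hR : IsPrufer R) {r m : R} (hr : r ∉ Q)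
    (hm : m ∉ Q.radical) {B : Ideal R} (hB : ∀ N : Ideal R, N.IsMaximal → B ≤ N → Q.radical ≤ N) :
    Q ≤ Ideal.span {r * m} ⊔ B := by
  intro q hq
  refine Ideal.mem_of_forall_isMaximal_exists_mul_mem fun N hN => ?_
  by_cases hBN : B ≤ N
  · obtain ⟨s, t, hsN, hst | hst⟩ := hR.exists_mul_eq_mul q (r * m) hN
    · exact ⟨s, hsN,
        hst ▸ Ideal.mem_sup_left (Ideal.mul_mem_left _ t (Ideal.mem_span_singleton_self _))⟩
    · have hrms : r * m * s ∈ Q := mul_comm s (r * m) ▸ hst ▸ Q.mul_mem_left t hq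
      rcases (Ideal.isPrimary_iff.mp hQ).2 hrms with hrm | hs
      · rcases (Ideal.isPrimary_iff.mp hQ).2 hrm with h | h
        exacts [absurd h hr, absurd h hm]
      · exact absurd (hB N hN hBN hs) hsN
  · obtain ⟨b, hb, hbN⟩ := SetLike.not_le_iff_exists.mp hBN
    exact ⟨b, hbN, Ideal.mem_sup_right (B.mul_mem_right q hb)⟩

end Ideal.IsPrimary

theorem primary_divisorial_of_branched_sharp_general (R : Type*) [CommRing R] [IsDomain R]
    (hR : IsPrufer R) (P : Ideal R) (hP : P.IsPrime) (h0 : P ≠ ⊥)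
    (hnm : ¬ P.IsMaximal) (hsharp : IsSharp R P) :
    ∀ Q : Ideal R, Q.IsPrimary → Q.radical = P → Q ≠ P → IsDivisorial R Q := by
  intro Q hQ hQP _
  subst hQP
  obtain ⟨I, hIfg, hIP, hImax⟩ := hsharp
  obtain ⟨k, hIk⟩ := Ideal.exists_pow_le_of_le_radical_of_fg hIP hIfg
  obtain ⟨M, hM, hPM⟩ := Ideal.exists_le_maximal _ hP.ne_top
  obtain ⟨m, hmM, hmP⟩ := SetLike.exists_of_lt (hPM.lt_of_ne fun h => hnm (h ▸ hM))
  have hQ0 : Q ≠ ⊥ := by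
    rintro rfl
    exact h0 Ideal.radical_bot_of_isReduced
  refine isDivisorial_of_forall_notMem_exists_isInvertibleIdeal hQ0 fun r hr => ?_
  have hQJ : Q ≤ Ideal.span {r * m} ⊔ I ^ k := hQ.le_span_mul_sup hR hr hmP
    fun N hN hIN => hImax N hN (hN.isPrime.le_of_pow_le hIN)
  exact ⟨_, hR _ (ne_bot_of_le_ne_bot hQ0 hQJ) ((Submodule.fg_span_singleton _).sup hIfg.pow),
    hQJ, hQ.notMem_span_mul_sup hIk hM hPM hmM hr⟩

/-- For a nonzero nonmaximal branched sharp prime `P` of a Prüfer domain, every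
proper `P`-primary ideal is divisorial. -/
theorem primary_divisorial_of_branched_sharp (R : Type*) [CommRing R] [IsDomain R]
    (hR : IsPrufer R) (P : Ideal R) (hP : P.IsPrime) (h0 : P ≠ ⊥)
    (hnm : ¬ P.IsMaximal) (hsharp : IsSharp R P)
    (hbr : ∃ Q : Ideal R, Q.IsPrimary ∧ Q.radical = P ∧ Q ≠ P) :
    ∀ Q : Ideal R, Q.IsPrimary → Q.radical = P → Q ≠ P → IsDivisorial R Q :=
  primary_divisorial_of_branched_sharp_general R hR P hP h0 hnm hsharp
end

section
/- Let R be an integral domain, X an indeterminate, and R(X) = {f/g : f, g ∈ R[X], the content ideal c(g) = R} the Nagata ring. For every nonzero ideal I of R, (R(X) : I·R(X)) = (R : I)·R(X); consequently I is divisorial in R if and only if I·R(X) is divisorial in R(X). -/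
/-- The multiplicative set of `R[X]` generated by the polynomials with unit
content ideal. -/
noncomputable def nagataSubmonoid (R : Type*) [CommRing R] : Submonoid (Polynomial R) :=
  Submonoid.closure {g | Ideal.span (Set.range g.coeff) = ⊤}

/-- The Nagata ring `R(X)`. -/
abbrev NagataRing (R : Type*) [CommRing R] := Localization (nagataSubmonoid R)

/-- The canonical map `R → R(X)`. -/
noncomputable def nagataMap (R : Type*) [CommRing R] : R →+* NagataRing R :=
  (algebraMap (Polynomial R) (NagataRing R)).comp Polynomial.C

theorem nagataSubmonoid_le_nonZeroDivisors (R : Type*) [CommRing R] [IsDomain R] :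
    nagataSubmonoid R ≤ nonZeroDivisors (Polynomial R) := by
  rw [nagataSubmonoid, Submonoid.closure_le]
  intro g hg
  refine mem_nonZeroDivisors_of_ne_zero ?_
  rintro rfl
  simp only [Set.mem_setOf_eq] at hg
  have : Ideal.span (Set.range (0 : Polynomial R).coeff) = ⊥ := by
    rw [Ideal.span_eq_bot]
    rintro x ⟨n, rfl⟩
    simp
  rw [this] at hg
  exact bot_ne_top hg

noncomputable instance instNagataDomain (R : Type*) [CommRing R] [IsDomain R] :
    IsDomain (NagataRing R) :=
  IsLocalization.isDomain_localization (nagataSubmonoid_le_nonZeroDivisors R)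

/-!
Write `K`, `L` for the quotient fields of `R` and `R(X)`. The arithmetic input is a cancellation
law: a polynomial `s` of unit content stays a nonzerodivisor modulo every principal ideal, so
`C a ∣ q * s` forces `C a ∣ q`. Comparing numerators in `R[X]`, it shows that if `w ∈ K` and
`P ∈ R[X]` have `w P ∈ R(X)`, then `w · P.coeff n ∈ R` for every `n`.

Let `M ≠ 0` be an `R`-submodule of `K` and `x (M R(X)) ⊆ R(X)`. Choose `0 ≠ m₀ ∈ M` and write
`x m₀ = P / s` with `c(s) = R`, so that `s x = m₀⁻¹ P`. For `m ∈ M`, `(m₀⁻¹ m) P = s x m ∈ R(X)`,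
so every `m₀⁻¹ · P.coeff n` lies in `(R : M)`, whence `x ∈ (R : M) R(X)`. Applying this to
`M = I` and to `M = (R : I)` computes the double dual of `I R(X)`; the case `P = 1` of the
cancellation law gives `I R(X) ∩ K = I`, which carries divisoriality back from `R(X)` to `R`.
-/

open Polynomial IsLocalization

namespace Polynomial

variable {B : Type*} [CommRing B]

theorem span_range_coeff_eq_contentIdeal (p : B[X]) :
    Ideal.span (Set.range p.coeff) = p.contentIdeal := by
  refine le_antisymm (Ideal.span_le.mpr ?_) (Ideal.span_le.mpr ?_)
  · rintro _ ⟨n, rfl⟩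
    exact p.coeff_mem_contentIdeal n
  · intro c hc
    obtain ⟨n, -, rfl⟩ := mem_coeffs_iff.mp hc
    exact Ideal.subset_span ⟨n, rfl⟩

variable {p : B[X]}

theorem mem_of_forall_mul_coeff_mem {I : Ideal B} {r : B} (hp : p.contentIdeal = ⊤)
    (h : ∀ n, r * p.coeff n ∈ I) : r ∈ I := by
  have hle : p.contentIdeal ≤ Submodule.comap (LinearMap.mulLeft B r) I := by
    rw [← span_range_coeff_eq_contentIdeal, Ideal.span_le]
    rintro _ ⟨n, rfl⟩
    exact h n
  simpa using hle (hp ▸ Submodule.mem_top : (1 : B) ∈ p.contentIdeal)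

theorem mem_nonZeroDivisors_of_contentIdeal_eq_top (hp : p.contentIdeal = ⊤) :
    p ∈ nonZeroDivisors B[X] :=
  Polynomial.mem_nonZeroDivisors_iff.mpr fun a ha =>
    Ideal.mem_bot.mp <| mem_of_forall_mul_coeff_mem hp fun n => by
      simpa using congr(coeff $ha n)

theorem C_dvd_of_dvd_mul_of_contentIdeal_eq_top {a : B} {q : B[X]} (hp : p.contentIdeal = ⊤)
    (h : C a ∣ q * p) : C a ∣ q := by
  set π := Ideal.Quotient.mk (Ideal.span {a})
  have hdvd_iff : ∀ f : B[X], C a ∣ f ↔ f.map π = 0 := fun f => by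
    simp only [C_dvd_iff_dvd_coeff, Polynomial.ext_iff, coeff_map, coeff_zero, π,
      Ideal.Quotient.eq_zero_iff_dvd]
  have hp' : (p.map π).contentIdeal = ⊤ := by
    rw [contentIdeal_map_eq_map_contentIdeal, hp, Ideal.map_top]
  rwa [hdvd_iff, Polynomial.map_mul,
    mul_right_mem_nonZeroDivisors_eq_zero_iff (mem_nonZeroDivisors_of_contentIdeal_eq_top hp'),
    ← hdvd_iff] at h

theorem mem_of_C_mul_mem_map_C {I : Ideal B} {r : B} (hp : p.contentIdeal = ⊤)
    (h : C r * p ∈ I.map C) : r ∈ I :=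
  mem_of_forall_mul_coeff_mem hp fun n => by
    simpa only [coeff_C_mul] using Ideal.mem_map_C_iff.mp h n

end Polynomial

theorem contentIdeal_eq_top_of_mem_nagataSubmonoid {B : Type*} [CommRing B] {s : B[X]}
    (hs : s ∈ nagataSubmonoid B) : s.contentIdeal = ⊤ := by
  induction hs using Submonoid.closure_induction with
  | mem s hs => rwa [← span_range_coeff_eq_contentIdeal]
  | one => exact contentIdeal_one
  | mul _ _ _ _ hs ht => exact contentIdeal_mul_eq_top_of_contentIdeal_eq_top hs ht

theorem comap_map_nagataMap {B : Type*} [CommRing B] (I : Ideal B) :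
    (I.map (nagataMap B)).comap (nagataMap B) = I := by
  refine le_antisymm (fun r hr => ?_) Ideal.le_comap_map
  rw [Ideal.mem_comap, nagataMap, ← Ideal.map_map, RingHom.comp_apply,
    algebraMap_mem_map_algebraMap_iff (nagataSubmonoid B)] at hr
  obtain ⟨s, hs, h⟩ := hr
  exact mem_of_C_mul_mem_map_C (contentIdeal_eq_top_of_mem_nagataSubmonoid hs) (mul_comm s _ ▸ h)

theorem nagataMap_injective (R : Type*) [CommRing R] [IsDomain R] :
    Function.Injective (nagataMap R) := by
  rw [nagataMap, RingHom.coe_comp]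
  exact (IsLocalization.injective _ (nagataSubmonoid_le_nonZeroDivisors R)).comp C_injective

theorem one_div_coeSubmodule_ne_bot {R : Type*} [CommRing R] {K : Type*} [Field K] [Algebra R K]
    (I : Ideal R) : 1 / coeSubmodule K I ≠ ⊥ := by
  have hle : coeSubmodule K I ≤ 1 := by
    rw [← coeSubmodule_top]
    exact coeSubmodule_mono _ le_top
  exact (Submodule.ne_bot_iff _).mpr
    ⟨1, Submodule.one_le.mp (Submodule.one_le_one_div.mpr hle), one_ne_zero⟩

theorem isDivisorial_iff_coeSubmodule {R : Type*} [CommRing R] [IsDomain R] {I : Ideal R}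
    (hI : I ≠ ⊥) :
    IsDivisorial R I ↔
      1 / (1 / coeSubmodule (FractionRing R) I) = coeSubmodule (FractionRing R) I := by
  have hF : (I : FractionalIdeal (nonZeroDivisors R) (FractionRing R)) ≠ 0 :=
    FractionalIdeal.coeIdeal_ne_zero.mpr hI
  have hF' : 1 / (I : FractionalIdeal (nonZeroDivisors R) (FractionRing R)) ≠ 0 := by
    intro h0
    have hle : (1 : FractionalIdeal (nonZeroDivisors R) (FractionRing R)) ≤ 1 / I := by
      rw [FractionalIdeal.le_div_iff_mul_le hF, one_mul]
      exact FractionalIdeal.coeIdeal_le_one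
    exact zero_ne_one' (FractionalIdeal (nonZeroDivisors R) (FractionRing R))
      (le_antisymm (FractionalIdeal.zero_le _) (h0 ▸ hle))
  rw [IsDivisorial, ← FractionalIdeal.coeToSubmodule_inj, FractionalIdeal.coe_div hF',
    FractionalIdeal.coe_div hF, FractionalIdeal.coe_one, FractionalIdeal.coe_coeIdeal]

section NagataExtension

variable {R : Type*} [CommRing R] {K : Type*} [Field K] [Algebra R K]
  {L : Type*} [Field L] [Algebra (NagataRing R) L] [Algebra R[X] L]
  [IsScalarTower R[X] (NagataRing R) L]

theorem algebraMap_nagataMap (r : R) :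
    algebraMap (NagataRing R) L (nagataMap R r) = algebraMap R[X] L (C r) :=
  (IsScalarTower.algebraMap_apply R[X] (NagataRing R) L (C r)).symm

variable (φ : K →+* L) (hφ : ∀ r : R, φ (algebraMap R K r) = algebraMap R[X] L (C r))
include hφ

theorem coeSubmodule_map_nagataMap (I : Ideal R) :
    coeSubmodule L (I.map (nagataMap R)) =
      Submodule.span (NagataRing R) (φ '' coeSubmodule K I) := by
  rw [Ideal.map, coeSubmodule_span, coeSubmodule, Submodule.map_coe, Set.image_image,
    Set.image_image]
  congr 2
  funext r
  simp [algebraMap_nagataMap, hφ]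

theorem map_mul_algebraMap_mem_span {N : Submodule R K} {y : K} {P : R[X]}
    (h : ∀ n, y * algebraMap R K (P.coeff n) ∈ N) :
    φ y * algebraMap R[X] L P ∈ Submodule.span (NagataRing R) (φ '' N) := by
  rw [P.as_sum_range_C_mul_X_pow, map_sum, Finset.mul_sum]
  refine Submodule.sum_mem _ fun n _ => ?_
  have hterm : φ y * algebraMap R[X] L (C (P.coeff n) * X ^ n)
      = algebraMap R[X] (NagataRing R) (X ^ n) • φ (y * algebraMap R K (P.coeff n)) := by
    rw [Algebra.smul_def, ← IsScalarTower.algebraMap_apply, map_mul, map_mul, hφ]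
    ring
  rw [hterm]
  exact Submodule.smul_mem _ _ (Submodule.subset_span ⟨_, h n, rfl⟩)

theorem span_image_one_div_le (M : Submodule R K) :
    Submodule.span (NagataRing R) (φ '' (1 / M : Submodule R K)) ≤
      1 / Submodule.span (NagataRing R) (φ '' M) := by
  rw [Submodule.le_div_iff_mul_le, Submodule.span_mul_span, Submodule.span_le]
  rintro _ ⟨_, ⟨z, hz, rfl⟩, _, ⟨m, hm, rfl⟩, rfl⟩
  obtain ⟨r, hr⟩ := Submodule.mem_one.mp (Submodule.mem_div_iff_forall_mul_mem.mp hz m hm)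
  show φ z * φ m ∈ (1 : Submodule (NagataRing R) L)
  rw [← map_mul, ← hr, hφ, IsScalarTower.algebraMap_apply R[X] (NagataRing R) L]
  exact Submodule.mem_one.mpr ⟨_, rfl⟩

end NagataExtension

section NagataExtensionDomain

variable {R : Type*} [CommRing R] [IsDomain R] {K : Type*} [Field K] [Algebra R K]
  [IsFractionRing R K] {L : Type*} [Field L] [Algebra (NagataRing R) L]
  [IsFractionRing (NagataRing R) L] [Algebra R[X] L] [IsScalarTower R[X] (NagataRing R) L]

theorem algebraMap_polynomial_injective : Function.Injective (algebraMap R[X] L) := by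
  rw [IsScalarTower.algebraMap_eq R[X] (NagataRing R) L, RingHom.coe_comp]
  exact (IsFractionRing.injective _ L).comp
    (IsLocalization.injective _ (nagataSubmonoid_le_nonZeroDivisors R))

variable (φ : K →+* L) (hφ : ∀ r : R, φ (algebraMap R K r) = algebraMap R[X] L (C r))
include hφ

theorem mul_algebraMap_coeff_mem_one {w : K} {P : R[X]}
    (h : φ w * algebraMap R[X] L P ∈ (1 : Submodule (NagataRing R) L)) (n : ℕ) :
    w * algebraMap R K (P.coeff n) ∈ (1 : Submodule R K) := by
  obtain ⟨a, ha⟩ := Submodule.mem_one.mp h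
  obtain ⟨⟨q, s⟩, hqs⟩ := IsLocalization.surj (nagataSubmonoid R) a
  obtain ⟨⟨c, e⟩, hce⟩ := IsLocalization.surj (nonZeroDivisors R) w
  have hpoly : C c * P * s = C (e : R) * q := by
    apply algebraMap_polynomial_injective (L := L)
    have hqs' := congr(algebraMap (NagataRing R) L $hqs)
    simp only [map_mul, ← IsScalarTower.algebraMap_apply, ha] at hqs'
    rw [map_mul, map_mul, map_mul, ← hφ, ← hφ, ← hce, ← hqs', map_mul]
    ring
  have hdvd : C (e : R) ∣ C c * P :=
    C_dvd_of_dvd_mul_of_contentIdeal_eq_top (contentIdeal_eq_top_of_mem_nagataSubmonoid s.2)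
      ⟨q, hpoly⟩
  obtain ⟨r, hr⟩ := (C_dvd_iff_dvd_coeff _ _).mp hdvd n
  rw [coeff_C_mul] at hr
  refine Submodule.mem_one.mpr ⟨r, mul_left_cancel₀
    (IsFractionRing.to_map_ne_zero_of_mem_nonZeroDivisors e.2) ?_⟩
  rw [← map_mul, ← hr, map_mul, ← hce]
  ring

theorem one_div_span_image_le {M : Submodule R K} (hM : M ≠ ⊥) :
    1 / Submodule.span (NagataRing R) (φ '' M) ≤
      Submodule.span (NagataRing R) (φ '' (1 / M : Submodule R K)) := by
  intro x hx
  have hxM : ∀ m ∈ M, x * φ m ∈ (1 : Submodule (NagataRing R) L) := fun m hm =>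
    Submodule.mem_div_iff_forall_mul_mem.mp hx _ (Submodule.subset_span ⟨m, hm, rfl⟩)
  obtain ⟨m₀, hm₀, hm₀_ne⟩ := (Submodule.ne_bot_iff M).mp hM
  obtain ⟨a, ha⟩ := Submodule.mem_one.mp (hxM m₀ hm₀)
  obtain ⟨⟨P, s⟩, hPs⟩ := IsLocalization.surj (nagataSubmonoid R) a
  have hx_eq : algebraMap R[X] (NagataRing R) s • x = φ m₀⁻¹ * algebraMap R[X] L P := by
    have hPs' := congr(algebraMap (NagataRing R) L $hPs)
    rw [map_mul, ha, ← IsScalarTower.algebraMap_apply, ← IsScalarTower.algebraMap_apply] at hPs'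
    rw [Algebra.smul_def, ← IsScalarTower.algebraMap_apply, ← hPs', map_inv₀]
    field_simp [(map_ne_zero φ).mpr hm₀_ne]
  have hcoeff : ∀ n, m₀⁻¹ * algebraMap R K (P.coeff n) ∈ (1 / M : Submodule R K) := fun n =>
    Submodule.mem_div_iff_forall_mul_mem.mpr fun m hm => by
      have hm_eq : φ (m₀⁻¹ * m) * algebraMap R[X] L P
          = algebraMap R[X] (NagataRing R) s • (x * φ m) := by
        rw [← smul_mul_assoc, hx_eq, map_mul]
        ring
      have hm_one := mul_algebraMap_coeff_mem_one φ hφ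
        (hm_eq ▸ Submodule.smul_mem _ _ (hxM m hm)) n
      rwa [mul_right_comm] at hm_one
  rw [← Submodule.smul_mem_iff_of_isUnit _ (IsLocalization.map_units (NagataRing R) s), hx_eq]
  exact map_mul_algebraMap_mem_span φ hφ hcoeff

theorem one_div_span_image {M : Submodule R K} (hM : M ≠ ⊥) :
    1 / Submodule.span (NagataRing R) (φ '' M) =
      Submodule.span (NagataRing R) (φ '' (1 / M : Submodule R K)) :=
  le_antisymm (one_div_span_image_le φ hφ hM) (span_image_one_div_le φ hφ M)

theorem mem_coeSubmodule_of_map_mem {I : Ideal R} {z : K}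
    (h : φ z ∈ coeSubmodule L (I.map (nagataMap R))) : z ∈ coeSubmodule K I := by
  obtain ⟨j, hj, hjz⟩ := (mem_coeSubmodule _ _).mp h
  have hz_one : z ∈ (1 : Submodule R K) := by
    simpa only [coeff_one_zero, map_one, mul_one] using mul_algebraMap_coeff_mem_one φ hφ (P := 1)
      (by simpa only [map_one, mul_one] using Submodule.mem_one.mpr ⟨j, hjz⟩) 0
  obtain ⟨r, rfl⟩ := Submodule.mem_one.mp hz_one
  rw [hφ, ← algebraMap_nagataMap] at hjz
  refine (mem_coeSubmodule _ _).mpr ⟨r, ?_, rfl⟩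
  rw [← comap_map_nagataMap I, Ideal.mem_comap, ← IsFractionRing.injective _ L hjz]
  exact hj

theorem span_image_eq_iff_of_coeSubmodule_le {I : Ideal R} {N : Submodule R K}
    (hN : coeSubmodule K I ≤ N) :
    Submodule.span (NagataRing R) (φ '' N) =
        Submodule.span (NagataRing R) (φ '' coeSubmodule K I) ↔ N = coeSubmodule K I := by
  refine ⟨fun h => le_antisymm (fun z hz => mem_coeSubmodule_of_map_mem φ hφ ?_) hN,
    fun h => h ▸ rfl⟩
  rw [coeSubmodule_map_nagataMap φ hφ, ← h]
  exact Submodule.subset_span ⟨z, hz, rfl⟩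

end NagataExtensionDomain

/-- For a nonzero ideal `I` of a domain `R`, `(R(X) : I R(X)) = (R : I) R(X)`;
consequently `I` is divisorial in `R` iff `I R(X)` is divisorial in `R(X)`.
Here `φ` is the (unique) embedding of quotient fields compatible with `R → R(X)`. -/
theorem nagata_dual_and_divisorial (R : Type*) [CommRing R] [IsDomain R]
    (I : Ideal R) (hI : I ≠ ⊥)
    (φ : FractionRing R →+* FractionRing (NagataRing R))
    (hφ : ∀ r : R, φ (algebraMap R (FractionRing R) r)
        = algebraMap (NagataRing R) (FractionRing (NagataRing R)) (nagataMap R r)) :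
    (((1 / ((I.map (nagataMap R) : Ideal (NagataRing R)) :
        FractionalIdeal (nonZeroDivisors (NagataRing R)) (FractionRing (NagataRing R)))) :
        FractionalIdeal (nonZeroDivisors (NagataRing R)) (FractionRing (NagataRing R))) :
        Submodule (NagataRing R) (FractionRing (NagataRing R)))
      = Submodule.span (NagataRing R)
          (φ '' (((1 / (I : FractionalIdeal (nonZeroDivisors R) (FractionRing R))) :
            FractionalIdeal (nonZeroDivisors R) (FractionRing R)) : Set (FractionRing R)))
    ∧ (IsDivisorial R I ↔ IsDivisorial (NagataRing R) (I.map (nagataMap R))) := by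
  have hφC : ∀ r, φ (algebraMap R _ r) = algebraMap R[X] _ (C r) := fun r =>
    (hφ r).trans (algebraMap_nagataMap r)
  have hM : coeSubmodule (FractionRing R) I ≠ ⊥ := by
    simpa [coeSubmodule_bot] using (coeSubmodule_injective (FractionRing R) le_rfl).ne hI
  have hJ : I.map (nagataMap R) ≠ ⊥ :=
    (Ideal.map_eq_bot_iff_of_injective (nagataMap_injective R)).not.mpr hI
  refine ⟨?_, ?_⟩
  · rw [FractionalIdeal.coe_div (FractionalIdeal.coeIdeal_ne_zero.mpr hJ), FractionalIdeal.coe_one,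
      FractionalIdeal.coe_coeIdeal, coeSubmodule_map_nagataMap φ hφC, one_div_span_image φ hφC hM,
      ← FractionalIdeal.coe_coeIdeal, ← FractionalIdeal.coe_one,
      ← FractionalIdeal.coe_div (FractionalIdeal.coeIdeal_ne_zero.mpr hI)]
    rfl
  · rw [isDivisorial_iff_coeSubmodule hI, isDivisorial_iff_coeSubmodule hJ,
      coeSubmodule_map_nagataMap φ hφC, one_div_span_image φ hφC hM,
      one_div_span_image φ hφC (one_div_coeSubmodule_ne_bot I), span_image_eq_iff_of_coeSubmodule_le φ hφC
        (Submodule.le_div_iff_mul_le.mpr Submodule.mul_one_div_le_one)]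
end

section
/- Let R be a Prüfer domain with a nonzero prime P such that P is sharp and branched. Then P = √B for some finitely generated ideal B of R; conversely, if P = √B for a finitely generated ideal B, then P is both sharp and branched. -/
lemma prufer_comparable {R : Type*} [CommRing R] [IsDomain R]
    (hR : IsPrufer R) {P Q M : Ideal R} (hP : P.IsPrime) (hQ : Q.IsPrime)
    (hPM : P ≤ M) (hQM : Q ≤ M) (hM : M ≠ ⊤) : P ≤ Q ∨ Q ≤ P := by
  by_contra hcon
  push_neg at hcon
  obtain ⟨hPQ, hQP⟩ := hcon
  obtain ⟨a, haP, haQ⟩ := SetLike.not_le_iff_exists.mp hPQ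
  obtain ⟨b, hbQ, hbP⟩ := SetLike.not_le_iff_exists.mp hQP
  set I : Ideal R := Ideal.span {a, b} with hI
  have haI : a ∈ I := Ideal.subset_span (by simp)
  have hbI : b ∈ I := Ideal.subset_span (by simp)
  have hane : a ≠ 0 := fun h => haQ (h ▸ Q.zero_mem)
  have hIne : I ≠ ⊥ := fun h => hane (by simpa [h] using haI)
  have hIfg : I.FG := Submodule.fg_span ((Set.finite_singleton b).insert a)
  obtain ⟨J, hJ⟩ := isUnit_iff_exists_inv.mp (hR I hIne hIfg)
  set K := FractionRing R
  set f := algebraMap R K with hf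
  have hfinj : Function.Injective f := IsFractionRing.injective R K
  -- decompose 1 as a'*y + b'*z with y, z ∈ J
  have h1 : (1 : K) ∈ ((I : FractionalIdeal (nonZeroDivisors R) K) * J :
      FractionalIdeal (nonZeroDivisors R) K) := by
    rw [hJ]; exact FractionalIdeal.one_mem_one _
  have h1' : (1 : K) ∈ ((I : FractionalIdeal (nonZeroDivisors R) K) : Submodule R K) *
      (J : Submodule R K) := by
    have := FractionalIdeal.mem_coe.mpr h1
    rwa [FractionalIdeal.coe_mul] at this
  have key : ∃ y ∈ (J : Submodule R K), ∃ z ∈ (J : Submodule R K), (1 : K) = f a * y + f b * z := by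
    refine Submodule.mul_induction_on h1' ?_ ?_
    · intro m hm n hn
      obtain ⟨c, hc, hfc⟩ := (FractionalIdeal.mem_coeIdeal _).mp hm
      obtain ⟨u, v, huv⟩ := Ideal.mem_span_pair.mp (by rwa [hI] at hc)
      refine ⟨f u * n, ?_, f v * n, ?_, ?_⟩
      · rw [show f u * n = u • n from (Algebra.smul_def u n).symm]
        exact Submodule.smul_mem _ u hn
      · rw [show f v * n = v • n from (Algebra.smul_def v n).symm]
        exact Submodule.smul_mem _ v hn
      rw [← hfc, ← huv]
      push_cast [hf]
      ring
    · rintro x y ⟨y1, hy1, z1, hz1, rfl⟩ ⟨y2, hy2, z2, hz2, rfl⟩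
      exact ⟨y1 + y2, Submodule.add_mem _ hy1 hy2, z1 + z2, Submodule.add_mem _ hz1 hz2,
        by ring⟩
  obtain ⟨y, hy, z, hz, hyz⟩ := key
  have mem1 : ∀ c ∈ I, ∀ w ∈ (J : Submodule R K), ∃ r : R, f r = f c * w := by
    intro c hc w hw
    have : f c * w ∈ ((I : FractionalIdeal (nonZeroDivisors R) K) * J :
        FractionalIdeal (nonZeroDivisors R) K) :=
      FractionalIdeal.mul_mem_mul (FractionalIdeal.mem_coeIdeal_of_mem _ hc) (FractionalIdeal.mem_coe.mp hw)
    rw [hJ] at this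
    exact FractionalIdeal.mem_one_iff _ |>.mp this
  obtain ⟨r1, hr1⟩ := mem1 a haI y hy
  obtain ⟨r2, hr2⟩ := mem1 b hbI z hz
  obtain ⟨u, hu⟩ := mem1 a haI z hz
  obtain ⟨v, hv⟩ := mem1 b hbI y hy
  have hsum : r1 + r2 = 1 := by
    apply hfinj; rw [map_add, map_one, hr1, hr2, hyz]
  have heq1 : b * r1 = a * v := by
    apply hfinj; rw [map_mul, map_mul, hr1, hv]; ring
  have heq2 : a * r2 = b * u := by
    apply hfinj; rw [map_mul, map_mul, hr2, hu]; ring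
  have : r1 ∉ M ∨ r2 ∉ M := by
    by_contra h
    push_neg at h
    exact hM (Ideal.eq_top_iff_one M |>.mpr (hsum ▸ M.add_mem h.1 h.2))
  rcases this with h | h
  · have : b * r1 ∈ P := heq1 ▸ P.mul_mem_right v haP
    rcases hP.mem_or_mem this with hb | hr
    · exact hbP hb
    · exact h (hPM hr)
  · have : a * r2 ∈ Q := heq2 ▸ Q.mul_mem_right u hbQ
    rcases hQ.mem_or_mem this with ha | hr
    · exact haQ ha
    · exact h (hQM hr)

/-- A nonzero prime of a Prüfer domain is sharp and branched iff it is the radical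
of a finitely generated ideal. -/
theorem sharp_and_branched_iff_radical_fg (R : Type*) [CommRing R] [IsDomain R]
    (hR : IsPrufer R) (P : Ideal R) (hP : P.IsPrime) (h0 : P ≠ ⊥) :
    (IsSharp R P ∧ ∃ B : Ideal R, B.FG ∧ P ∈ B.minimalPrimes) ↔
      ∃ B : Ideal R, B.FG ∧ B.radical = P := by
  constructor
  · rintro ⟨⟨I, hIfg, hIP, hImax⟩, B, hBfg, hBP⟩
    refine ⟨B ⊔ I, Submodule.FG.sup hBfg hIfg, le_antisymm ?_ ?_⟩
    · exact hP.radical_le_iff.mpr (sup_le hBP.1.2 hIP)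
    · rw [Ideal.radical_eq_sInf]
      refine le_sInf ?_
      rintro Q ⟨hCQ, hQprime⟩
      obtain ⟨M, hMmax, hQM⟩ := Ideal.exists_le_maximal Q hQprime.ne_top
      have hPM : P ≤ M := hImax M hMmax (le_trans le_sup_right (le_trans hCQ hQM))
      rcases prufer_comparable hR hP hQprime hPM hQM hMmax.ne_top with h | h
      · exact h
      · exact hBP.2 ⟨hQprime, le_trans le_sup_left hCQ⟩ h
  · rintro ⟨B, hBfg, hBrad⟩
    have hBP : B ≤ P := hBrad ▸ Ideal.le_radical
    refine ⟨⟨B, hBfg, hBP, fun M hM hBM => ?_⟩, B, hBfg, ⟨⟨hP, hBP⟩, fun Q hQ hQle => ?_⟩⟩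
    · exact hBrad ▸ hM.isPrime.radical_le_iff.mpr hBM
    · exact hBrad ▸ hQ.1.radical_le_iff.mpr hQ.2
end
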